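/- arXiv:1811.12547 — 9 statements merged into one kernel-verified Lean document; each statement's English description precedes it below -/
import Mathlib

section
/- Let (X,d) be a metric space, let U_1,…,U_k ⊆ X be sets with U_1 ∪ … ∪ U_k = X, and let s_1,…,s_k ∈ X; put Σ = {s_1,…,s_k}. Then cell(s_i,Σ) = U_i holds for every i ∈ {1,…,k} if and only if s_i and s_j are compatible for all pairs i ≠ j. -/
/-- The Voronoi cell of a site `s` among the set of sites `Σ` in a metric space. -/
def voronoiCell {X : Type*} [MetricSpace X] (Sig : Finset X) (s : X) : Set X :=
  {x | ∀ s' ∈ Sig, dist s x ≤ dist s' x}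

/-- Two candidate sites `sᵢ`, `sⱼ` for candidate cells `Uᵢ`, `Uⱼ` are compatible. -/
def Compatible {X : Type*} [MetricSpace X] (Ui Uj : Set X) (si sj : X) : Prop :=
  (∀ u ∈ Ui ∩ Uj, dist si u = dist sj u) ∧
  (∀ u ∈ Ui \ Uj, dist si u < dist sj u) ∧
  (∀ u ∈ Uj \ Ui, dist sj u < dist si u)

/-- With `Σ = {s_1, …, s_k}` and sets `U_1, …, U_k` covering `X`, all Voronoi cells are as
prescribed (`cell(sᵢ,Σ) = Uᵢ` for every `i`) if and only if all pairs of sites are compatible. -/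
theorem cells_eq_iff_pairwise_compatible {X : Type*} [MetricSpace X] [DecidableEq X]
    (k : ℕ) (U : Fin k → Set X) (st : Fin k → X)
    (hcover : (⋃ i, U i) = Set.univ) :
    (∀ i, voronoiCell (Finset.univ.image st) (st i) = U i) ↔
      (∀ i j, i ≠ j → Compatible (U i) (U j) (st i) (st j)) := by
  have hmem : ∀ j : Fin k, st j ∈ Finset.univ.image st := fun j =>
    Finset.mem_image.2 ⟨j, Finset.mem_univ j, rfl⟩
  constructor
  · intro hcell i j hij
    refine ⟨?_, ?_, ?_⟩
    · intro u hu
      have h1 : u ∈ voronoiCell (Finset.univ.image st) (st i) := (hcell i).symm ▸ hu.1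
      have h2 : u ∈ voronoiCell (Finset.univ.image st) (st j) := (hcell j).symm ▸ hu.2
      exact le_antisymm (h1 (st j) (hmem j)) (h2 (st i) (hmem i))
    · intro u hu
      have h1 : u ∈ voronoiCell (Finset.univ.image st) (st i) := (hcell i).symm ▸ hu.1
      rcases lt_or_eq_of_le (h1 (st j) (hmem j)) with h | h
      · exact h
      · exfalso
        apply hu.2
        rw [← hcell j]
        intro s' hs'
        calc dist (st j) u = dist (st i) u := h.symm
          _ ≤ dist s' u := h1 s' hs'
    · intro u hu
      have h1 : u ∈ voronoiCell (Finset.univ.image st) (st j) := (hcell j).symm ▸ hu.1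
      rcases lt_or_eq_of_le (h1 (st i) (hmem i)) with h | h
      · exact h
      · exfalso
        apply hu.2
        rw [← hcell i]
        intro s' hs'
        calc dist (st i) u = dist (st j) u := h.symm
          _ ≤ dist s' u := h1 s' hs'
  · intro hcomp i
    ext x
    constructor
    · intro hx
      have hxU : x ∈ ⋃ j, U j := hcover ▸ Set.mem_univ x
      rcases Set.mem_iUnion.1 hxU with ⟨j, hxj⟩
      by_cases hij : j = i
      · exact hij ▸ hxj
      · by_contra hxi
        have := (hcomp j i (fun h => hij h)).2.1 x ⟨hxj, hxi⟩
        exact absurd (hx (st j) (hmem j)) (not_le.2 this)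
    · intro hx s' hs'
      rcases Finset.mem_image.1 hs' with ⟨j, _, rfl⟩
      by_cases hij : i = j
      · rw [hij]
      · by_cases hxj : x ∈ U j
        · exact le_of_eq ((hcomp i j hij).1 x ⟨hx, hxj⟩)
        · exact le_of_lt ((hcomp i j hij).2.1 x ⟨hx, hxj⟩)
end

section
/- Let T be a finite tree with positive edge-lengths and shortest-path distance d_T, let Σ ⊆ V(T) be a finite nonempty set of sites, let s ∈ Σ, and let v ∈ cell_T(s,Σ). Then every vertex on the unique path in T from s to v belongs to cell_T(s,Σ). -/
open SimpleGraph

private lemma toFinset_sum_le_list_sum {α : Type*} [DecidableEq α] (w : α → ℝ)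
    (l : List α) (h : ∀ e ∈ l, 0 ≤ w e) : l.toFinset.sum w ≤ (l.map w).sum := by
  induction l with
  | nil => simp
  | cons a l ih =>
    have ha : 0 ≤ w a := h a (by simp)
    have ih' := ih (fun e he => h e (by simp [he]))
    simp only [List.toFinset_cons, List.map_cons, List.sum_cons]
    by_cases hmem : a ∈ l.toFinset
    · rw [Finset.insert_eq_self.mpr hmem]
      linarith
    · rw [Finset.sum_insert hmem]
      linarith

private lemma walk_sum_ge {V : Type*} (T : SimpleGraph V) (w : Sym2 V → ℝ)
    (hw : ∀ e ∈ T.edgeSet, 0 < w e) (d : V → V → ℝ)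
    (hd : ∀ (u v : V) (p : T.Walk u v), p.IsPath → (p.edges.map w).sum = d u v)
    {a b : V} (q : T.Walk a b) : d a b ≤ (q.edges.map w).sum := by
  classical
  have hpath := q.bypass_isPath
  rw [← hd a b q.bypass hpath]
  have hnd : q.bypass.edges.Nodup := hpath.isTrail.edges_nodup
  have hsub : q.bypass.edges ⊆ q.edges := q.edges_bypass_subset
  have h1 : (q.bypass.edges.map w).sum = q.bypass.edges.toFinset.sum w :=
    (List.sum_toFinset w hnd).symm
  have h2 : q.bypass.edges.toFinset ⊆ q.edges.toFinset := by
    intro e he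
    simp only [List.mem_toFinset] at *
    exact hsub he
  have h3 : q.edges.toFinset.sum w ≤ (q.edges.map w).sum :=
    toFinset_sum_le_list_sum w q.edges
      (fun e he => (hw e (q.edges_subset_edgeSet he)).le)
  have h4 : q.bypass.edges.toFinset.sum w ≤ q.edges.toFinset.sum w :=
    Finset.sum_le_sum_of_subset_of_nonneg h2
      (fun e he _ => (hw e (q.edges_subset_edgeSet (List.mem_toFinset.mp he))).le)
  linarith

/-- Let `T` be a finite tree with positive edge-lengths `w` and shortest-path distance `d`
(characterized by: the length of any path from `u` to `v` is `d u v`).  If `v` lies in the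
Voronoi cell of a site `s ∈ Σ`, then every vertex on the unique path in `T` from `s` to `v`
also lies in the Voronoi cell of `s`. -/
theorem cell_path_closed {V : Type*} [Fintype V] (T : SimpleGraph V) (hT : T.IsTree)
    (w : Sym2 V → ℝ) (hw : ∀ e ∈ T.edgeSet, 0 < w e)
    (d : V → V → ℝ)
    (hd : ∀ (u v : V) (p : T.Walk u v), p.IsPath → (p.edges.map w).sum = d u v)
    (Sig : Finset V) (hSig : Sig.Nonempty) (s : V) (hs : s ∈ Sig)
    (v : V) (hv : ∀ s' ∈ Sig, d s v ≤ d s' v)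
    (p : T.Walk s v) (hp : p.IsPath) :
    ∀ u ∈ p.support, ∀ s' ∈ Sig, d s u ≤ d s' u := by
  classical
  intro u hu s' hs'
  -- split p at u
  have hsplit := p.take_spec hu
  have htake : (p.takeUntil u hu).IsPath := hp.takeUntil hu
  have hdrop : (p.dropUntil u hu).IsPath := hp.dropUntil hu
  have hsum : ((p.takeUntil u hu).edges.map w).sum + ((p.dropUntil u hu).edges.map w).sum
      = (p.edges.map w).sum := by
    rw [← List.sum_append, ← List.map_append, ← Walk.edges_append, hsplit]
  have h1 : d s u + d u v = d s v := by
    rw [← hd s u _ htake, ← hd u v _ hdrop, ← hd s v p hp, hsum]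
  -- path from s' to u
  obtain ⟨q0⟩ := hT.isConnected s' u
  set q := q0.bypass with hqdef
  have hq : (q.edges.map w).sum = d s' u := hd s' u q q0.bypass_isPath
  have hdw : ((p.dropUntil u hu).edges.map w).sum = d u v := hd u v _ hdrop
  have h2 : d s' v ≤ d s' u + d u v := by
    have := walk_sum_ge T w hw d hd (q.append (p.dropUntil u hu))
    rwa [Walk.edges_append, List.map_append, List.sum_append, hq, hdw] at this
  have h4 := hv s' hs'
  linarith
end

section
/- Let T be a finite tree with positive edge-lengths and shortest-path distance d_T, let Σ ⊆ V(T) be a finite nonempty set of sites, let s ∈ Σ, and let v ∈ cell^<_T(s,Σ). Then every vertex on the unique path in T from s to v belongs to cell^<_T(s,Σ). -/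
private lemma walk_sum_le {V : Type*} (T : SimpleGraph V)
    (w : Sym2 V → ℝ) (hw : ∀ e ∈ T.edgeSet, 0 < w e)
    {a c : V} (q : T.Walk a c) (hq : q.IsPath) (r : T.Walk a c)
    (hsub : q.edges ⊆ r.edges) :
    (q.edges.map w).sum ≤ (r.edges.map w).sum := by
  classical
  have hle : (q.edges : Multiset (Sym2 V)) ≤ (r.edges : Multiset (Sym2 V)) := by
    rw [Multiset.le_iff_count]
    intro e
    by_cases he : e ∈ q.edges
    · have h1 : (q.edges : Multiset (Sym2 V)).count e = 1 :=
        Multiset.count_eq_one_of_mem (by exact_mod_cast hq.edges_nodup) (by exact_mod_cast he)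
      have h2 : 1 ≤ (r.edges : Multiset (Sym2 V)).count e :=
        Multiset.one_le_count_iff_mem.mpr (by exact_mod_cast hsub he)
      omega
    · simp [Multiset.count_eq_zero_of_notMem (by exact_mod_cast he : e ∉ (q.edges : Multiset (Sym2 V)))]
  obtain ⟨t, ht⟩ := Multiset.le_iff_exists_add.mp hle
  have : ((r.edges : Multiset (Sym2 V)).map w).sum
      = ((q.edges : Multiset (Sym2 V)).map w).sum + (t.map w).sum := by
    rw [ht, Multiset.map_add, Multiset.sum_add]
  have hsum : (r.edges.map w).sum = (q.edges.map w).sum + (t.map w).sum := by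
    simpa using this
  have ht0 : 0 ≤ (t.map w).sum := by
    apply Multiset.sum_nonneg
    intro x hx
    obtain ⟨e, he, rfl⟩ := Multiset.mem_map.mp hx
    have : e ∈ r.edges := by
      have : e ∈ (r.edges : Multiset (Sym2 V)) := by rw [ht]; exact Multiset.mem_add.mpr (Or.inr he)
      exact_mod_cast this
    exact le_of_lt (hw e (r.edges_subset_edgeSet this))
  linarith

/-- Let `T` be a finite tree with positive edge-lengths `w` and shortest-path distance `d`
(characterized by: the length of any path from `u` to `v` is `d u v`).  If `v` lies in the
open Voronoi cell of a site `s ∈ Σ`, then every vertex on the unique path in `T` from `s`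
to `v` also lies in the open Voronoi cell of `s`. -/
theorem openCell_path_closed {V : Type*} [Fintype V] (T : SimpleGraph V) (hT : T.IsTree)
    (w : Sym2 V → ℝ) (hw : ∀ e ∈ T.edgeSet, 0 < w e)
    (d : V → V → ℝ)
    (hd : ∀ (u v : V) (p : T.Walk u v), p.IsPath → (p.edges.map w).sum = d u v)
    (Sig : Finset V) (hSig : Sig.Nonempty) (s : V) (hs : s ∈ Sig)
    (v : V) (hv : ∀ s' ∈ Sig, s' ≠ s → d s v < d s' v)
    (p : T.Walk s v) (hp : p.IsPath) :
    ∀ u ∈ p.support, ∀ s' ∈ Sig, s' ≠ s → d s u < d s' u := by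
  classical
  -- triangle inequality
  have triangle : ∀ a b c : V, d a c ≤ d a b + d b c := by
    intro a b c
    obtain ⟨pab⟩ := hT.isConnected.preconnected a b
    obtain ⟨pbc⟩ := hT.isConnected.preconnected b c
    set r := (pab.bypass.append pbc.bypass) with hr
    have hq : r.bypass.IsPath := r.bypass_isPath
    have h1 := hd a c r.bypass hq
    have h2 := hd a b pab.bypass pab.bypass_isPath
    have h3 := hd b c pbc.bypass pbc.bypass_isPath
    have hle := walk_sum_le T w hw r.bypass hq r r.edges_bypass_subset
    have hredges : (r.edges.map w).sum = (pab.bypass.edges.map w).sum + (pbc.bypass.edges.map w).sum := by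
      rw [hr, SimpleGraph.Walk.edges_append, List.map_append, List.sum_append]
    linarith
  intro u hu s' hs' hne
  have htake := hp.takeUntil hu
  have hdrop := hp.dropUntil hu
  have hspec := p.take_spec hu
  have hedges : p.edges = (p.takeUntil u hu).edges ++ (p.dropUntil u hu).edges := by
    conv_lhs => rw [← hspec]
    rw [SimpleGraph.Walk.edges_append]
  have hsum : d s v = d s u + d u v := by
    have h1 := hd s v p hp
    have h2 := hd s u (p.takeUntil u hu) htake
    have h3 := hd u v (p.dropUntil u hu) hdrop
    rw [← h1, ← h2, ← h3, hedges, List.map_append, List.sum_append]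
  have h4 := hv s' hs' hne
  have h5 := triangle s' u v
  linarith
end

section
/- There exists a set T ⊆ 𝒱 with |C_j ∩ T| = 1 for every j ∈ {1,…,m} if and only if there exist vertices s_x ∈ V(G) for x ∈ 𝒱 and t_j ∈ V(G) for j ∈ {1,…,m} such that, with Σ = {s_x : x ∈ 𝒱} ∪ {t_j : j ∈ {1,…,m}}, one has cell_G(s_x,Σ) = {v(x), v̄(x)} for every x ∈ 𝒱 and cell_G(t_j,Σ) = Δ(j) for every j ∈ {1,…,m}. -/
/-- Vertices of the graph `G` built from a Positive 1-in-3-SAT instance: a pair `(x, true)`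
is the vertex `v(x)`, `(x, false)` is `v̄(x)`, and `⟨j, x⟩` is the triangle vertex `v(j,x)`
for `x ∈ C j`. -/
def SatVert (𝒱 : Type*) (m : ℕ) (C : Fin m → Finset 𝒱) : Type _ :=
  (𝒱 × Bool) ⊕ ((j : Fin m) × {x : 𝒱 // x ∈ C j})

/-- The base relation generating the edges of `G`: `v(x)v̄(x)`; the triangle on
`Δ(j) = {v(j,x) : x ∈ C j}`; and `v(j,x)v(x)`. -/
def satRel {𝒱 : Type*} {m : ℕ} {C : Fin m → Finset 𝒱} :
    SatVert 𝒱 m C → SatVert 𝒱 m C → Prop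
  | .inl (x, b), .inl (x', b') => x = x' ∧ b ≠ b'
  | .inl (x, b), .inr ⟨_, x'⟩ => b = true ∧ x = (x' : 𝒱)
  | .inr ⟨_, x⟩, .inl (x', b) => b = true ∧ (x : 𝒱) = x'
  | .inr ⟨j, x⟩, .inr ⟨j', x'⟩ => j = j' ∧ (x : 𝒱) ≠ (x' : 𝒱)

/-- The graph `G` of the reduction (with unit edge-lengths). -/
def satGraph (𝒱 : Type*) (m : ℕ) (C : Fin m → Finset 𝒱) : SimpleGraph (SatVert 𝒱 m C) :=
  SimpleGraph.fromRel satRel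

/-- The Voronoi cell of a site `s` among the sites `Σ` in a graph with unit edge-lengths,
using the extended (ℕ∞-valued) shortest-path distance, which is `∞` across components. -/
def graphCell {V : Type*} (G : SimpleGraph V) (Sig : Set V) (s : V) : Set V :=
  {v | ∀ s' ∈ Sig, G.edist s v ≤ G.edist s' v}

/-!
Every vertex of `G` is within distance 1 of the site of its own gadget (the pair `{v(x), v̄(x)}`
or the triangle `Δ(j)`). So when each site lies in its gadget, the Voronoi cells are exactly the
gadgets as soon as no site is adjacent to a non-site vertex of another gadget. The only edges
between gadgets are `v(x) v(j,x)`, and they are harmless exactly when `v(x)` is a site iff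
`v(j,x)` is one, i.e. when `T = {x | s_x = v(x)}` meets `C_j` exactly in the `x` with
`t_j = v(j,x)`. Conversely every site lies in its own cell, which forces `s_x ∈ {v(x), v̄(x)}` and
`t_j ∈ Δ(j)`, and a neighbour of a site outside that site's cell must itself be a site.
-/
section GraphCell

open SimpleGraph

lemma mem_graphCell_self {V : Type*} (G : SimpleGraph V) (Sig : Set V) (s : V) :
    s ∈ graphCell G Sig s :=
  fun _ _ => by simp

variable {V : Type*} {G : SimpleGraph V} {Sig : Set V} {s v : V}

lemma mem_of_adj_of_notMem_graphCell (hadj : G.Adj s v) (hv : v ∉ graphCell G Sig s) :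
    v ∈ Sig := by
  simp only [graphCell, Set.mem_ofPred_eq, not_forall, not_le, exists_prop] at hv
  obtain ⟨s', hs', hlt⟩ := hv
  rw [edist_eq_one_iff_adj.mpr hadj, Order.lt_one_iff, edist_eq_zero_iff] at hlt
  exact hlt ▸ hs'

lemma graphCell_eq_fiber {P : V → V} (hP : ∀ v, P v ∈ Sig) (hfix : ∀ s ∈ Sig, P s = s)
    (hnear : ∀ v, G.edist (P v) v ≤ 1) (hadj : ∀ s ∈ Sig, ∀ v ∉ Sig, G.Adj s v → P v = s)
    (hs : s ∈ Sig) : graphCell G Sig s = {v | P v = s} := by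
  ext v
  constructor
  · intro hv
    by_contra hne
    have hvs : v ≠ s := fun h => hne (h ▸ hfix s hs)
    have hsv : G.Adj s v := by
      have := (hv (P v) (hP v)).trans (hnear v)
      simpa [edist_le_one_iff_adj_or_eq, hvs.symm] using this
    refine hne (hadj s hs v (fun hvS => hvs ?_) hsv)
    have := (hv v hvS).trans_eq edist_self
    exact (edist_eq_zero_iff.mp (nonpos_iff_eq_zero.mp this)).symm
  · rintro (rfl : P v = s) s' hs'
    by_cases hvs' : s' = v
    · subst hvs'
      rw [hfix s' hs']
    · exact (hnear v).trans (Order.one_le_iff_ne_zero.mpr (by simpa [edist_eq_zero_iff]))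

end GraphCell

namespace SatVert

variable {𝒱 : Type*} {m : ℕ} {C : Fin m → Finset 𝒱}

-- `SatVert` is not reducible, so a bare `Sum.inl (x, c)` does not have type `SatVert 𝒱 m C` up to
-- instance transparency and `rw`/`simp` fail on it; these constructors carry the right type.
def lit (x : 𝒱) (c : Bool) : SatVert 𝒱 m C := .inl (x, c)

def tri (j : Fin m) (z : {x // x ∈ C j}) : SatVert 𝒱 m C := .inr ⟨j, z⟩

lemma eq_lit_or_eq_tri (v : SatVert 𝒱 m C) : (∃ x c, v = lit x c) ∨ ∃ j z, v = tri j z := by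
  rcases v with ⟨x, c⟩ | ⟨j, z⟩
  exacts [.inl ⟨x, c, rfl⟩, .inr ⟨j, z, rfl⟩]

@[simp] lemma lit_inj {x x' : 𝒱} {c c' : Bool} :
    (lit x c : SatVert 𝒱 m C) = lit x' c' ↔ x = x' ∧ c = c' :=
  Sum.inl_injective.eq_iff.trans Prod.mk_inj

@[simp] lemma tri_inj {j j' : Fin m} {z : {x // x ∈ C j}} {z' : {x // x ∈ C j'}} :
    tri j z = tri j' z' ↔ j = j' ∧ (z : 𝒱) = z' := by
  constructor
  · intro h
    injection h with h
    cases h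
    exact ⟨rfl, rfl⟩
  · rintro ⟨rfl, h⟩
    rw [Subtype.ext h]

@[simp] lemma lit_ne_tri {x : 𝒱} {c : Bool} {j : Fin m} {z : {x // x ∈ C j}} :
    lit x c ≠ tri j z := Sum.inl_ne_inr

@[simp] lemma tri_ne_lit {x : 𝒱} {c : Bool} {j : Fin m} {z : {x // x ∈ C j}} :
    tri j z ≠ lit x c := Sum.inr_ne_inl

end SatVert

open SatVert

section SatGraph

variable {𝒱 : Type*} {m : ℕ} {C : Fin m → Finset 𝒱}

lemma satGraph_adj {u v : SatVert 𝒱 m C} :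
    (satGraph 𝒱 m C).Adj u v ↔ u ≠ v ∧ (satRel u v ∨ satRel v u) :=
  SimpleGraph.fromRel_adj ..

@[simp] lemma satGraph_adj_lit_lit {x x' : 𝒱} {c c' : Bool} :
    (satGraph 𝒱 m C).Adj (lit x c) (lit x' c') ↔ x = x' ∧ c ≠ c' := by
  rw [satGraph_adj]
  simp only [satRel, lit]
  grind

@[simp] lemma satGraph_adj_lit_tri {x : 𝒱} {c : Bool} {j : Fin m} {z : {x // x ∈ C j}} :
    (satGraph 𝒱 m C).Adj (lit x c) (tri j z) ↔ c = true ∧ x = z := by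
  rw [satGraph_adj]
  simp only [satRel, lit, tri]
  grind

@[simp] lemma satGraph_adj_tri_lit {x : 𝒱} {c : Bool} {j : Fin m} {z : {x // x ∈ C j}} :
    (satGraph 𝒱 m C).Adj (tri j z) (lit x c) ↔ c = true ∧ x = z := by
  rw [SimpleGraph.adj_comm, satGraph_adj_lit_tri]

@[simp] lemma satGraph_adj_tri_tri {j j' : Fin m} {z : {x // x ∈ C j}} {z' : {x // x ∈ C j'}} :
    (satGraph 𝒱 m C).Adj (tri j z) (tri j' z') ↔ j = j' ∧ (z : 𝒱) ≠ z' := by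
  rw [satGraph_adj]
  simp only [satRel, tri]
  grind

lemma satGraph_edist_lit_lit_le_one (x : 𝒱) (c c' : Bool) :
    (satGraph 𝒱 m C).edist (lit x c) (lit x c') ≤ 1 := by
  rw [SimpleGraph.edist_le_one_iff_adj_or_eq]
  by_cases h : c = c' <;> simp [h]

lemma satGraph_edist_tri_tri_le_one (j : Fin m) (z z' : {x // x ∈ C j}) :
    (satGraph 𝒱 m C).edist (tri j z) (tri j z') ≤ 1 := by
  rw [SimpleGraph.edist_le_one_iff_adj_or_eq]
  by_cases h : (z : 𝒱) = z' <;> simp [h]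

variable (b : 𝒱 → Bool) (y : (j : Fin m) → {x // x ∈ C j})

def pairSite (x : 𝒱) : SatVert 𝒱 m C := lit x (b x)

def triangleSite (j : Fin m) : SatVert 𝒱 m C := tri j (y j)

def satOwner : SatVert 𝒱 m C → SatVert 𝒱 m C
  | .inl (x, _) => pairSite b x
  | .inr ⟨j, _⟩ => triangleSite y j

@[simp] lemma satOwner_lit (x : 𝒱) (c : Bool) : satOwner b y (lit x c) = pairSite b x := rfl

@[simp] lemma satOwner_tri (j : Fin m) (z : {x // x ∈ C j}) :
    satOwner b y (tri j z) = triangleSite y j := rfl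

lemma graphCell_satGraph_eq_fiber (hby : ∀ j, ∀ x ∈ C j, b x = true ↔ x = y j)
    {s : SatVert 𝒱 m C} (hs : s ∈ Set.range (pairSite b) ∪ Set.range (triangleSite y)) :
    graphCell (satGraph 𝒱 m C) (Set.range (pairSite b) ∪ Set.range (triangleSite y)) s =
      {v | satOwner b y v = s} := by
  refine graphCell_eq_fiber (fun v => ?_) ?_ (fun v => ?_) ?_ hs
  · obtain ⟨x, c, rfl⟩ | ⟨j, z, rfl⟩ := v.eq_lit_or_eq_tri
    exacts [.inl ⟨x, rfl⟩, .inr ⟨j, rfl⟩]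
  · rintro _ (⟨x, rfl⟩ | ⟨j, rfl⟩)
    exacts [satOwner_lit .., satOwner_tri ..]
  · obtain ⟨x, c, rfl⟩ | ⟨j, z, rfl⟩ := v.eq_lit_or_eq_tri
    exacts [satGraph_edist_lit_lit_le_one x _ c, satGraph_edist_tri_tri_le_one j _ z]
  · rintro _ (⟨x, rfl⟩ | ⟨j, rfl⟩) v hv hsv <;>
      obtain ⟨x', c, rfl⟩ | ⟨j', z, rfl⟩ := v.eq_lit_or_eq_tri
    · obtain ⟨rfl, -⟩ := satGraph_adj_lit_lit.mp hsv
      rfl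
    · obtain ⟨hbx, rfl⟩ := satGraph_adj_lit_tri.mp hsv
      obtain rfl : z = y j' := Subtype.ext ((hby j' z z.2).mp hbx)
      exact absurd (.inr ⟨j', rfl⟩) hv
    · obtain ⟨rfl, rfl⟩ := satGraph_adj_tri_lit.mp hsv
      have hb : b (y j) = true := (hby j _ (y j).2).mpr rfl
      exact absurd (.inl ⟨y j, by rw [pairSite, hb]⟩) hv
    · obtain ⟨rfl, -⟩ := satGraph_adj_tri_tri.mp hsv
      rfl

lemma satOwner_fiber_pairSite (x : 𝒱) :
    {v : SatVert 𝒱 m C | satOwner b y v = pairSite b x} = {lit x true, lit x false} := by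
  ext v
  obtain ⟨x', c, rfl⟩ | ⟨j', z, rfl⟩ := v.eq_lit_or_eq_tri
  · cases c <;> simp +contextual [pairSite, eq_comm]
  · simp [pairSite, triangleSite]

lemma satOwner_fiber_triangleSite (j : Fin m) :
    {v : SatVert 𝒱 m C | satOwner b y v = triangleSite y j} =
      {a | ∃ x : {x // x ∈ C j}, a = tri j x} := by
  ext v
  obtain ⟨x', c, rfl⟩ | ⟨j', z, rfl⟩ := v.eq_lit_or_eq_tri
  · simp [pairSite, triangleSite]
  · simp only [Set.mem_ofPred_eq, satOwner_tri, triangleSite, tri_inj]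
    constructor
    · rintro ⟨rfl, -⟩
      exact ⟨z, rfl, rfl⟩
    · rintro ⟨z', rfl, -⟩
      exact ⟨rfl, rfl⟩

theorem graphCell_satGraph_iff :
    ((∀ x, graphCell (satGraph 𝒱 m C) (Set.range (pairSite b) ∪ Set.range (triangleSite y))
          (pairSite b x) = {lit x true, lit x false}) ∧
      ∀ j, graphCell (satGraph 𝒱 m C) (Set.range (pairSite b) ∪ Set.range (triangleSite y))
          (triangleSite y j) = {a | ∃ z, a = tri j z}) ↔
      ∀ j, ∀ x ∈ C j, b x = true ↔ x = y j := by
  constructor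
  · rintro ⟨hpair, htri⟩ j x hx
    constructor
    · intro hbx
      have hadj : (satGraph 𝒱 m C).Adj (pairSite b x) (tri j ⟨x, hx⟩) :=
        satGraph_adj_lit_tri.mpr ⟨hbx, rfl⟩
      have hout : tri j ⟨x, hx⟩ ∉ graphCell (satGraph 𝒱 m C)
          (Set.range (pairSite b) ∪ Set.range (triangleSite y)) (pairSite b x) := by
        simp [hpair x]
      obtain ⟨x', h⟩ | ⟨j', h⟩ := mem_of_adj_of_notMem_graphCell hadj hout
      · exact absurd h lit_ne_tri
      · obtain ⟨rfl, h⟩ := tri_inj.mp h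
        exact h.symm
    · rintro rfl
      have hadj : (satGraph 𝒱 m C).Adj (triangleSite y j) (lit (y j : 𝒱) true) :=
        satGraph_adj_tri_lit.mpr ⟨rfl, rfl⟩
      have hout : lit (y j : 𝒱) true ∉ graphCell (satGraph 𝒱 m C)
          (Set.range (pairSite b) ∪ Set.range (triangleSite y)) (triangleSite y j) := by
        simp [htri j]
      obtain ⟨x', h⟩ | ⟨j', h⟩ := mem_of_adj_of_notMem_graphCell hadj hout
      · obtain ⟨rfl, h⟩ := lit_inj.mp h
        exact h
      · exact absurd h tri_ne_lit
  · intro hby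
    refine ⟨fun x => ?_, fun j => ?_⟩
    · rw [graphCell_satGraph_eq_fiber b y hby (.inl ⟨x, rfl⟩), satOwner_fiber_pairSite]
    · rw [graphCell_satGraph_eq_fiber b y hby (.inr ⟨j, rfl⟩), satOwner_fiber_triangleSite]

lemma exists_eq_pairSite {Sig : Set (SatVert 𝒱 m C)} {sx : 𝒱 → SatVert 𝒱 m C}
    (h : ∀ x, graphCell (satGraph 𝒱 m C) Sig (sx x) = {lit x true, lit x false}) :
    ∃ b, sx = pairSite b := by
  have hsx (x : 𝒱) : ∃ c, sx x = lit x c := by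
    have hmem := mem_graphCell_self (satGraph 𝒱 m C) Sig (sx x)
    rw [h x] at hmem
    rcases hmem with hc | hc
    exacts [⟨_, hc⟩, ⟨_, hc⟩]
  choose b hb using hsx
  exact ⟨b, funext hb⟩

lemma exists_eq_triangleSite {Sig : Set (SatVert 𝒱 m C)} {tj : Fin m → SatVert 𝒱 m C}
    (h : ∀ j, graphCell (satGraph 𝒱 m C) Sig (tj j) = {a | ∃ z, a = tri j z}) :
    ∃ y, tj = triangleSite y := by
  have htj (j : Fin m) : ∃ z, tj j = tri j z := by
    have hmem := mem_graphCell_self (satGraph 𝒱 m C) Sig (tj j)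
    rwa [h j] at hmem
  choose y hy using htj
  exact ⟨y, funext hy⟩

end SatGraph

lemma exists_card_inter_eq_one_iff {𝒱 : Type*} [DecidableEq 𝒱] {m : ℕ}
    (C : Fin m → Finset 𝒱) :
    (∃ T : Finset 𝒱, ∀ j, (C j ∩ T).card = 1) ↔
      ∃ (b : 𝒱 → Bool) (y : (j : Fin m) → {x // x ∈ C j}),
        ∀ j, ∀ x ∈ C j, b x = true ↔ x = y j := by
  constructor
  · rintro ⟨T, hT⟩
    choose a ha using fun j => Finset.card_eq_one.mp (hT j)
    have hmem (j : Fin m) (x : 𝒱) : x ∈ C j ∧ x ∈ T ↔ x = a j := by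
      rw [← Finset.mem_inter, ha j, Finset.mem_singleton]
    refine ⟨fun x => decide (x ∈ T), fun j => ⟨a j, ((hmem j _).mpr rfl).1⟩, fun j x hx => ?_⟩
    simpa [hx] using hmem j x
  · rintro ⟨b, y, hby⟩
    refine ⟨Finset.univ.image fun j => (y j : 𝒱), fun j => Finset.card_eq_one.mpr ⟨y j, ?_⟩⟩
    ext x
    simp only [Finset.mem_inter, Finset.mem_image, Finset.mem_univ, true_and, Finset.mem_singleton]
    constructor
    · rintro ⟨hx, j', rfl⟩
      exact (hby j _ hx).mp ((hby j' _ (y j').2).mpr rfl)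
    · rintro rfl
      exact ⟨(y j).2, j, rfl⟩

theorem one_in_three_sat_iff_inverse_voronoi_general
    (𝒱 : Type*) [DecidableEq 𝒱] (m : ℕ) (C : Fin m → Finset 𝒱) :
    (∃ Tset : Finset 𝒱, ∀ j, ((C j) ∩ Tset).card = 1) ↔
      (∃ (sx : 𝒱 → SatVert 𝒱 m C) (tj : Fin m → SatVert 𝒱 m C),
        (∀ x : 𝒱,
          graphCell (satGraph 𝒱 m C) (Set.range sx ∪ Set.range tj) (sx x) =
            {Sum.inl (x, true), Sum.inl (x, false)}) ∧
        (∀ j : Fin m,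
          graphCell (satGraph 𝒱 m C) (Set.range sx ∪ Set.range tj) (tj j) =
            {a | ∃ x : {x : 𝒱 // x ∈ C j}, a = Sum.inr ⟨j, x⟩})) := by
  rw [exists_card_inter_eq_one_iff]
  constructor
  · rintro ⟨b, y, hby⟩
    exact ⟨pairSite b, triangleSite y, (graphCell_satGraph_iff b y).mpr hby⟩
  · rintro ⟨sx, tj, hpair, htri⟩
    obtain ⟨b, rfl⟩ := exists_eq_pairSite hpair
    obtain ⟨y, rfl⟩ := exists_eq_triangleSite htri
    exact ⟨b, y, (graphCell_satGraph_iff b y).mp ⟨hpair, htri⟩⟩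

/-- There is a set `T ⊆ 𝒱` meeting every 3-element clause `C j` in exactly one element iff
there are sites `sx x` (for the pairs `{v(x), v̄(x)}`) and `tj j` (for the triangles `Δ(j)`)
whose Voronoi diagram in `G` consists exactly of the pairs `{v(x), v̄(x)}` and the
triangles `Δ(j)`. -/
theorem one_in_three_sat_iff_inverse_voronoi
    (𝒱 : Type*) [Fintype 𝒱] [DecidableEq 𝒱] (m : ℕ) (C : Fin m → Finset 𝒱)
    (hC : ∀ j, (C j).card = 3) :
    (∃ Tset : Finset 𝒱, ∀ j, ((C j) ∩ Tset).card = 1) ↔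
      (∃ (sx : 𝒱 → SatVert 𝒱 m C) (tj : Fin m → SatVert 𝒱 m C),
        (∀ x : 𝒱,
          graphCell (satGraph 𝒱 m C) (Set.range sx ∪ Set.range tj) (sx x) =
            {Sum.inl (x, true), Sum.inl (x, false)}) ∧
        (∀ j : Fin m,
          graphCell (satGraph 𝒱 m C) (Set.range sx ∪ Set.range tj) (tj j) =
            {a | ∃ x : {x : 𝒱 // x ∈ C j}, a = Sum.inr ⟨j, x⟩})) :=
  one_in_three_sat_iff_inverse_voronoi_general 𝒱 m C
end

section
/- If there exist vertices v_i ∈ V_i for i ∈ {1,…,ℓ} such that v_i v_j ∈ E(H) for every edge ij ∈ E(P), then, setting s_{ij} = w(v_i v_j) for each ij ∈ E(P) and Σ = {s_{ij} : ij ∈ E(P)}, one has cell_G(s_{ij},Σ) = U_{ij} for every ij ∈ E(P). -/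
/-- Vertices of the graph `G(H,P)`: the vertices of `H` together with one vertex `w(e)` for
each edge `e` of `H`. -/
def GHPVert {V : Type*} (H : SimpleGraph V) : Type _ :=
  V ⊕ {e : Sym2 V // e ∈ H.edgeSet}

/-- The base relation generating the edges of `G(H,P)`: each class `Vᵢ = part⁻¹(i)` is a
clique; `w(e)` is adjacent to both endpoints of `e`; and the subdivision vertices of edges
joining the same pair of classes form a clique. -/
def ghpRel {V : Type*} {ℓ : ℕ} (H : SimpleGraph V) (part : V → Fin ℓ) :
    GHPVert H → GHPVert H → Prop
  | .inl u, .inl v => part u = part v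
  | .inl u, .inr e => u ∈ (e : Sym2 V)
  | .inr e, .inl u => u ∈ (e : Sym2 V)
  | .inr e, .inr f => Sym2.map part (e : Sym2 V) = Sym2.map part (f : Sym2 V)

/-- The graph `G(H,P)` (with unit edge-lengths). -/
def ghpGraph {V : Type*} {ℓ : ℕ} (H : SimpleGraph V) (part : V → Fin ℓ) :
    SimpleGraph (GHPVert H) :=
  SimpleGraph.fromRel (ghpRel H part)

/-- The candidate Voronoi cell `U_{ij} = W_{ij} ∪ Vᵢ ∪ Vⱼ`, for the edge `ε = ij` of `P`. -/
def ghpCellSet {V : Type*} {ℓ : ℕ} (H : SimpleGraph V) (part : V → Fin ℓ)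
    (ε : Sym2 (Fin ℓ)) : Set (GHPVert H) :=
  {a | (∃ u : V, a = Sum.inl u ∧ part u ∈ ε) ∨
       (∃ e : {e : Sym2 V // e ∈ H.edgeSet}, a = Sum.inr e ∧ Sym2.map part (e : Sym2 V) = ε)}

/-!
Let `s_ε = w(v_i v_j)` be the site of `ε = ij`. A vertex `u ∈ V_i` is within distance 2 of
`s_ε` (through `v_i`), and it is adjacent to some site only when `u = v_i`, in which case it is
adjacent to `s_ε` too, so no site beats `s_ε` at `u`. A subdivision vertex of `W_{ij}` is adjacent
or equal to `s_ε`, and equal to no other site. Conversely, a vertex of `V_k` with `k ∉ ε` is at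
distance at least 3 from `s_ε` but within 2 of the site of any `P`-edge at `k`, and a
subdivision vertex of `W_{kl}` with `kl ≠ ij` is at distance at least 2 from `s_ε` but within 1
of `s_{kl}`.
-/

open Function SimpleGraph

namespace Sym2

variable {α β : Type*} {p : α → β} {v : β → α}

lemma map_map_of_leftInverse (hv : LeftInverse p v) (z : Sym2 β) : (z.map v).map p = z := by
  rw [map_map, hv.comp_eq_id, map_id, id]

lemma mem_map_iff_of_leftInverse (hv : LeftInverse p v) {z : Sym2 β} {a : α} :
    a ∈ z.map v ↔ p a ∈ z ∧ v (p a) = a := by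
  rw [mem_map]
  constructor
  · rintro ⟨b, hb, rfl⟩
    rw [hv b]
    exact ⟨hb, rfl⟩
  · rintro ⟨ha, hva⟩
    exact ⟨p a, ha, hva⟩

end Sym2

section graphCell

variable {W : Type*} {G : SimpleGraph W} {Sig : Set W} {s a : W}

lemma notMem_graphCell_of_edist_lt {s' : W} (hs' : s' ∈ Sig) (h : G.edist s' a < G.edist s a) :
    a ∉ graphCell G Sig s :=
  fun ha => (h.trans_le (ha s' hs')).false

lemma mem_graphCell_of_edist_le_one (h : G.edist s a ≤ 1) (hSig : a ∈ Sig → a = s) :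
    a ∈ graphCell G Sig s := by
  intro s' hs'
  by_cases has' : s' = a
  · subst has'
    rw [hSig hs']
  · exact h.trans (Order.one_le_iff_pos.mpr (edist_pos_of_ne has'))

lemma mem_graphCell_of_edist_le_two (h : G.edist s a ≤ 2) (ha : a ∉ Sig)
    (hadj : ∀ s' ∈ Sig, G.Adj s' a → G.Adj s a) : a ∈ graphCell G Sig s := by
  intro s' hs'
  rcases le_or_gt (G.edist s' a) 1 with h1 | h1
  · rcases edist_le_one_iff_adj_or_eq.mp h1 with hs'a | rfl
    · rw [edist_eq_one_iff_adj.mpr hs'a, edist_eq_one_iff_adj.mpr (hadj s' hs' hs'a)]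
    · exact absurd hs' ha
  · exact h.trans (Order.add_one_le_of_lt h1)

end graphCell

section ghpGraph

variable {V : Type*} {ℓ : ℕ} {H : SimpleGraph V} {part : V → Fin ℓ}

lemma ghpRel_symm : ∀ {a b : GHPVert H}, ghpRel H part a b → ghpRel H part b a
  | .inl _, .inl _, h => h.symm
  | .inl _, .inr _, h => h
  | .inr _, .inl _, h => h
  | .inr _, .inr _, h => h.symm

lemma ghpGraph_adj {a b : GHPVert H} : (ghpGraph H part).Adj a b ↔ a ≠ b ∧ ghpRel H part a b :=
  (fromRel_adj _ a b).trans (and_congr_right fun _ => or_iff_left_of_imp ghpRel_symm)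

lemma ghpGraph_adj_inl_inl {u w : V} :
    (ghpGraph H part).Adj (.inl u) (.inl w) ↔ u ≠ w ∧ part u = part w :=
  ghpGraph_adj.trans (Iff.and Sum.inl_injective.ne_iff Iff.rfl)

lemma ghpGraph_adj_inr_inl {e : H.edgeSet} {u : V} :
    (ghpGraph H part).Adj (.inr e) (.inl u) ↔ u ∈ (e : Sym2 V) :=
  ghpGraph_adj.trans (and_iff_right Sum.inr_ne_inl)

lemma ghpGraph_adj_inr_inr {e f : H.edgeSet} :
    (ghpGraph H part).Adj (.inr e) (.inr f) ↔
      e ≠ f ∧ (e : Sym2 V).map part = (f : Sym2 V).map part :=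
  ghpGraph_adj.trans (Iff.and Sum.inr_injective.ne_iff Iff.rfl)

lemma ghpGraph_edist_inr_inl_le_two {e : H.edgeSet} {x u : V} (hx : x ∈ (e : Sym2 V))
    (hxu : part x = part u) : (ghpGraph H part).edist (.inr e) (.inl u) ≤ 2 := by
  have hxu' : (ghpGraph H part).edist (.inl x) (.inl u) ≤ 1 := by
    refine edist_le_one_iff_adj_or_eq.mpr ?_
    by_cases h : x = u
    · exact Or.inr (congrArg _ h)
    · exact Or.inl (ghpGraph_adj_inl_inl.mpr ⟨h, hxu⟩)
  calc (ghpGraph H part).edist (.inr e) (.inl u)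
      ≤ (ghpGraph H part).edist (.inr e) (.inl x) + (ghpGraph H part).edist (.inl x) (.inl u) :=
        SimpleGraph.edist_triangle
    _ ≤ 1 + 1 := add_le_add (edist_eq_one_iff_adj.mpr (ghpGraph_adj_inr_inl.mpr hx)).le hxu'
    _ = 2 := one_add_one_eq_two

lemma ghpGraph_two_lt_edist_inr_inl {e : H.edgeSet} {u : V}
    (hu : part u ∉ (e : Sym2 V).map part) : 2 < (ghpGraph H part).edist (.inr e) (.inl u) := by
  refine two_lt_edist_iff.mpr ⟨Sum.inr_ne_inl, fun h => hu ?_, ?_⟩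
  · exact Sym2.mem_map.mpr ⟨u, ghpGraph_adj_inr_inl.mp h, rfl⟩
  · refine Set.eq_empty_of_forall_notMem fun z hz => hu ?_
    replace hz := (mem_commonNeighbors _).mp hz
    rcases z with x | f
    · rw [(ghpGraph_adj_inl_inl.mp hz.2).2]
      exact Sym2.mem_map.mpr ⟨x, ghpGraph_adj_inr_inl.mp hz.1, rfl⟩
    · rw [(ghpGraph_adj_inr_inr.mp hz.1).2]
      exact Sym2.mem_map.mpr ⟨u, ghpGraph_adj_inr_inl.mp hz.2.symm, rfl⟩

lemma ghpGraph_edist_inr_inr_le_one {e f : H.edgeSet}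
    (h : (e : Sym2 V).map part = (f : Sym2 V).map part) :
    (ghpGraph H part).edist (.inr e) (.inr f) ≤ 1 := by
  refine edist_le_one_iff_adj_or_eq.mpr ?_
  by_cases hef : e = f
  · exact Or.inr (congrArg _ hef)
  · exact Or.inl (ghpGraph_adj_inr_inr.mpr ⟨hef, h⟩)

lemma ghpGraph_one_lt_edist_inr_inr {e f : H.edgeSet}
    (h : (e : Sym2 V).map part ≠ (f : Sym2 V).map part) :
    1 < (ghpGraph H part).edist (.inr e) (.inr f) := by
  refine lt_of_not_ge fun h1 => ?_
  rcases edist_le_one_iff_adj_or_eq.mp h1 with h' | h'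
  · exact h (ghpGraph_adj_inr_inr.mp h').2
  · exact h (by rw [Sum.inr_injective h'])

lemma mem_ghpCellSet_inl {u : V} {δ : Sym2 (Fin ℓ)} :
    (.inl u : GHPVert H) ∈ ghpCellSet H part δ ↔ part u ∈ δ := by
  refine ⟨?_, fun h => Or.inl ⟨u, rfl, h⟩⟩
  rintro (⟨u', hu', h⟩ | ⟨f, hf, -⟩)
  · rwa [Sum.inl_injective hu']
  · exact absurd hf Sum.inl_ne_inr

lemma mem_ghpCellSet_inr {f : H.edgeSet} {δ : Sym2 (Fin ℓ)} :
    (.inr f : GHPVert H) ∈ ghpCellSet H part δ ↔ (f : Sym2 V).map part = δ := by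
  refine ⟨?_, fun h => Or.inr ⟨f, rfl, h⟩⟩
  rintro (⟨u, hu, -⟩ | ⟨f', hf', h⟩)
  · exact absurd hu Sum.inr_ne_inl
  · rwa [Sum.inr_injective hf']

end ghpGraph

section sites

variable {V : Type*} {ℓ : ℕ} {H : SimpleGraph V} {part : V → Fin ℓ} {P : SimpleGraph (Fin ℓ)}
  {v : Fin ℓ → V} {σ : P.edgeSet → GHPVert H}

lemma inl_mem_graphCell_iff (hv : LeftInverse part v) (hdeg : ∀ i, ∃ j, P.Adj i j)
    (hσ : ∀ ε : P.edgeSet, ∃ e : H.edgeSet, σ ε = .inr e ∧ (e : Sym2 V) = (ε : Sym2 _).map v)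
    (ε : P.edgeSet) (u : V) :
    .inl u ∈ graphCell (ghpGraph H part) (Set.range σ) (σ ε) ↔ part u ∈ (ε : Sym2 (Fin ℓ)) := by
  obtain ⟨e, hσε, he⟩ := hσ ε
  constructor
  · contrapose
    intro hu
    obtain ⟨k, hk⟩ := hdeg (part u)
    let ε' : P.edgeSet := ⟨s(part u, k), hk⟩
    obtain ⟨e', hσε', he'⟩ := hσ ε'
    have hv' : v (part u) ∈ (e' : Sym2 V) := by
      rw [he']
      exact Sym2.mem_map.mpr ⟨part u, Sym2.mem_mk_left _ _, rfl⟩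
    refine notMem_graphCell_of_edist_lt (Set.mem_range_self ε') ?_
    rw [hσε, hσε']
    calc _ ≤ 2 := ghpGraph_edist_inr_inl_le_two hv' (hv _)
      _ < _ := ghpGraph_two_lt_edist_inr_inl (by rwa [he, Sym2.map_map_of_leftInverse hv])
  · intro hu
    refine mem_graphCell_of_edist_le_two ?_ ?_ ?_
    · rw [hσε]
      exact ghpGraph_edist_inr_inl_le_two (he ▸ Sym2.mem_map.mpr ⟨_, hu, rfl⟩) (hv _)
    · rintro ⟨ε', h⟩
      obtain ⟨e', hσε', -⟩ := hσ ε'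
      exact Sum.inr_ne_inl (hσε'.symm.trans h)
    · rintro _ ⟨ε', rfl⟩ hadj
      obtain ⟨e', hσε', he'⟩ := hσ ε'
      rw [hσε', ghpGraph_adj_inr_inl, he', Sym2.mem_map_iff_of_leftInverse hv] at hadj
      rw [hσε, ghpGraph_adj_inr_inl, he, Sym2.mem_map_iff_of_leftInverse hv]
      exact ⟨hu, hadj.2⟩

lemma inr_mem_graphCell_iff (hv : LeftInverse part v)
    (hHP : ∀ u w : V, H.Adj u w → P.Adj (part u) (part w))
    (hσ : ∀ ε : P.edgeSet, ∃ e : H.edgeSet, σ ε = .inr e ∧ (e : Sym2 V) = (ε : Sym2 _).map v)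
    (ε : P.edgeSet) (f : H.edgeSet) :
    .inr f ∈ graphCell (ghpGraph H part) (Set.range σ) (σ ε) ↔
      (f : Sym2 V).map part = ε := by
  obtain ⟨e, hσε, he⟩ := hσ ε
  constructor
  · contrapose
    intro hf
    let φ : H →g P := ⟨part, hHP _ _⟩
    let ε' : P.edgeSet := ⟨_, φ.map_mem_edgeSet f.2⟩
    obtain ⟨e', hσε', he'⟩ := hσ ε'
    refine notMem_graphCell_of_edist_lt (Set.mem_range_self ε') ?_
    rw [hσε, hσε']
    calc _ ≤ 1 := ghpGraph_edist_inr_inr_le_one (by rw [he', Sym2.map_map_of_leftInverse hv]; rfl)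
      _ < _ := ghpGraph_one_lt_edist_inr_inr (by rwa [he, Sym2.map_map_of_leftInverse hv, ne_comm])
  · intro hf
    refine mem_graphCell_of_edist_le_one ?_ ?_
    · rw [hσε]
      exact ghpGraph_edist_inr_inr_le_one (by rw [he, Sym2.map_map_of_leftInverse hv, hf])
    · rintro ⟨ε', h⟩
      obtain ⟨e', hσε', he'⟩ := hσ ε'
      have hε' : ε' = ε := Subtype.ext <| by
        rw [← hf, ← Sum.inr_injective (hσε'.symm.trans h), he', Sym2.map_map_of_leftInverse hv]
      rw [← h, hε']

end sites

theorem multicolored_subgraph_gives_voronoi_general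
    {V : Type*} {ℓ : ℕ} (H : SimpleGraph V) (part : V → Fin ℓ)
    (P : SimpleGraph (Fin ℓ))
    (hdeg : ∀ i : Fin ℓ, ∃ a b, a ≠ b ∧ P.Adj i a ∧ P.Adj i b)
    (hHP : ∀ u v : V, H.Adj u v → P.Adj (part u) (part v))
    (v : Fin ℓ → V) (hv1 : ∀ i, part (v i) = i)
    (σ : P.edgeSet → GHPVert H)
    (hσ : ∀ ε : P.edgeSet, ∃ e : {e : Sym2 V // e ∈ H.edgeSet},
      σ ε = Sum.inr e ∧ (e : Sym2 V) = Sym2.map v (ε : Sym2 (Fin ℓ))) :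
    ∀ ε : P.edgeSet,
      graphCell (ghpGraph H part) (Set.range σ) (σ ε) =
        ghpCellSet H part (ε : Sym2 (Fin ℓ)) := by
  have hnbr : ∀ i, ∃ j, P.Adj i j := fun i =>
    let ⟨a, _, _, ha, _⟩ := hdeg i
    ⟨a, ha⟩
  intro ε
  ext (u | f)
  · exact (inl_mem_graphCell_iff hv1 hnbr hσ ε u).trans mem_ghpCellSet_inl.symm
  · exact (inr_mem_graphCell_iff hv1 hHP hσ ε f).trans mem_ghpCellSet_inr.symm

/-- If the pattern `P` is isomorphic to a multicolored subgraph of `H` via `v i ∈ Vᵢ`, then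
placing the site for each edge `ij ∈ E(P)` on the subdivision vertex `w(vᵢvⱼ)` realizes the
candidate cells `U_{ij}` as the Voronoi diagram of `G(H,P)`. -/
theorem multicolored_subgraph_gives_voronoi
    {V : Type*} [Fintype V] {ℓ : ℕ} (H : SimpleGraph V) (part : V → Fin ℓ)
    (hpartsur : ∀ i, ∃ u, part u = i)
    (P : SimpleGraph (Fin ℓ))
    (hdeg : ∀ i : Fin ℓ, ∃ a b, a ≠ b ∧ P.Adj i a ∧ P.Adj i b)
    (hHP : ∀ u v : V, H.Adj u v → P.Adj (part u) (part v))
    (v : Fin ℓ → V) (hv1 : ∀ i, part (v i) = i)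
    (hv2 : ∀ i j, P.Adj i j → H.Adj (v i) (v j))
    (σ : P.edgeSet → GHPVert H)
    (hσ : ∀ ε : P.edgeSet, ∃ e : {e : Sym2 V // e ∈ H.edgeSet},
      σ ε = Sum.inr e ∧ (e : Sym2 V) = Sym2.map v (ε : Sym2 (Fin ℓ))) :
    ∀ ε : P.edgeSet,
      graphCell (ghpGraph H part) (Set.range σ) (σ ε) =
        ghpCellSet H part (ε : Sym2 (Fin ℓ)) :=
  multicolored_subgraph_gives_voronoi_general H part P hdeg hHP v hv1 σ hσ
end

section
/- Suppose ε > 0, S_i ⊆ W_i for every i ∈ {1,…,k}, each set U_i induces a connected subgraph of T, and W_1 induces a connected subgraph of T. Let xy be an edge of T with x ∈ W_1 and y ∈ U_1 \ W_1, and let I' be the instance obtained from I by expanding the edge xy by ε. Then res(I') ≥ res(I). -/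
/-!
Every value entering `res(I')` already enters `res(I)`. Send a vertex `a` of `T'` to
`ρ a ∈ V` (itself, and `y` for the subdivision vertex `y'`). If `a ∈ U'ᵢ` then `ρ a ∈ Uᵢ`, and
`d'(s, a) = d(s, ρ a)` for every site `s ∈ Sᵢ`: an old vertex `a` is joined to `s` by a path of
`T` avoiding the edge `xy` (inside `Uᵢ ∌ x` when `i ≠ 1`; through `W₁ ∌ y` to `x` and then, by
the choice of `U'₁`, back to `a` when `i = 1`), and such paths keep their length in `T'`; for
`y'`, the path from `s` to `x` inside `W₁` followed by `xy'` is as long as the same path followed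
by `xy`. So the set of positive differences can only shrink.
-/

open SimpleGraph Sum

namespace SimpleGraph

variable {V V' : Type*} {G : SimpleGraph V}

lemma exists_isPath_support_subset_of_preconnected_induce {s : Set V}
    (h : (G.induce s).Preconnected) {a b : V} (ha : a ∈ s) (hb : b ∈ s) :
    ∃ p : G.Walk a b, p.IsPath ∧ ∀ v ∈ p.support, v ∈ s := by
  classical
  obtain ⟨q⟩ := h ⟨a, ha⟩ ⟨b, hb⟩
  let p : G.Walk a b := q.map (Embedding.induce s).toHom
  refine ⟨p.bypass, p.bypass_isPath, fun v hv => ?_⟩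
  replace hv := p.support_bypass_subset_support hv
  erw [Walk.support_map, List.mem_map] at hv
  obtain ⟨⟨v, hv⟩, -, rfl⟩ := hv
  exact hv

lemma Walk.reachable_deleteEdges_of_notMem_support {a b z : V} {e : Sym2 V} (p : G.Walk a b)
    (hz : z ∉ p.support) (he : z ∈ e) : (G.deleteEdges {e}).Reachable a b :=
  ⟨p.toDeleteEdge e fun hp => hz (p.mem_support_of_mem_edges hp he)⟩

lemma reachable_deleteEdges_of_preconnected_induce {s : Set V} (h : (G.induce s).Preconnected)
    {a b z : V} {e : Sym2 V} (ha : a ∈ s) (hb : b ∈ s) (hz : z ∉ s) (he : z ∈ e) :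
    (G.deleteEdges {e}).Reachable a b := by
  obtain ⟨p, -, hp⟩ := exists_isPath_support_subset_of_preconnected_induce h ha hb
  exact p.reachable_deleteEdges_of_notMem_support (fun hzp => hz (hp z hzp)) he

lemma Reachable.deleteEdges_of_forall_isPath {u x y : V} (hux : G.Reachable u x)
    (h : ∀ p : G.Walk u x, p.IsPath → y ∉ p.support) :
    (G.deleteEdges {s(x, y)}).Reachable u x := by
  classical
  obtain ⟨q⟩ := hux
  exact q.bypass.reachable_deleteEdges_of_notMem_support (h _ q.bypass_isPath)
    (Sym2.mem_mk_right x y)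

def IsPathDist (G : SimpleGraph V) (w : Sym2 V → ℝ) (d : V → V → ℝ) : Prop :=
  ∀ (u v : V) (p : G.Walk u v), p.IsPath → (p.edges.map w).sum = d u v

namespace IsPathDist

variable {w : Sym2 V → ℝ} {d : V → V → ℝ}

lemma apply_eq_add_of_adj (hd : IsPathDist G w d) {a b c : V} {p : G.Walk a b} (hp : p.IsPath)
    (hbc : G.Adj b c) (hc : c ∉ p.support) : d a c = d a b + w s(b, c) := by
  rw [← hd _ _ _ (hp.concat hc hbc), ← hd _ _ _ hp]
  simp [Walk.edges_concat]

lemma apply_map_eq {H : SimpleGraph V} {G' : SimpleGraph V'} {w' : Sym2 V' → ℝ}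
    {d' : V' → V' → ℝ} (hd : IsPathDist G w d) (hd' : IsPathDist G' w' d') (hHG : H ≤ G)
    (φ : H →g G') (hφ : Function.Injective φ) (hw : ∀ e, w' (e.map φ) = w e) {a b : V}
    (hab : H.Reachable a b) : d' (φ a) (φ b) = d a b := by
  classical
  obtain ⟨p⟩ := hab
  have hp := p.bypass_isPath
  rw [← hd' _ _ _ (hp.map hφ), ← hd _ _ _ (hp.mapLe hHG)]
  simp [Walk.edges_map, Function.comp_def, hw]

end IsPathDist

section Subdivision

variable {T : SimpleGraph V} {T' : SimpleGraph (V ⊕ Unit)} {x y : V}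
  {w : Sym2 V → ℝ} {w' : Sym2 (V ⊕ Unit) → ℝ} {d : V → V → ℝ} {d' : V ⊕ Unit → V ⊕ Unit → ℝ}

def deleteEdgesHomInl (hT' : ∀ u v, T.Adj u v → s(u, v) ≠ s(x, y) → T'.Adj (inl u) (inl v)) :
    T.deleteEdges {s(x, y)} →g T' :=
  ⟨inl, fun h => ((deleteEdges_adj ..).1 h).elim (hT' _ _)⟩

lemma IsPathDist.apply_inl_eq (hd : T.IsPathDist w d) (hd' : T'.IsPathDist w' d')
    (hT' : ∀ u v, T.Adj u v → s(u, v) ≠ s(x, y) → T'.Adj (inl u) (inl v))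
    (hw' : ∀ u v, w' s(inl u, inl v) = w s(u, v)) {a b : V}
    (hab : (T.deleteEdges {s(x, y)}).Reachable a b) : d' (inl a) (inl b) = d a b :=
  hd.apply_map_eq hd' (deleteEdges_le _) (deleteEdgesHomInl hT') inl_injective (Sym2.ind hw') hab

lemma IsPathDist.apply_inl_inr_eq (hd : T.IsPathDist w d) (hd' : T'.IsPathDist w' d')
    (hT' : ∀ u v, T.Adj u v → s(u, v) ≠ s(x, y) → T'.Adj (inl u) (inl v))
    (hw' : ∀ u v, w' s(inl u, inl v) = w s(u, v)) (hxy : T.Adj x y)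
    (hxy' : T'.Adj (inl x) (inr ())) (hw'x : w' s(inl x, inr ()) = w s(x, y)) {a : V}
    {p : T.Walk a x} (hp : p.IsPath) (hy : y ∉ p.support) : d' (inl a) (inr ()) = d a y := by
  have he : s(x, y) ∉ p.edges := fun h => hy (p.snd_mem_support_of_mem_edges h)
  let q := (p.toDeleteEdge _ he).map (deleteEdgesHomInl hT')
  have hq : q.IsPath := (hp.toDeleteEdges _ _ _).map inl_injective
  have hr : inr () ∉ q.support := by simp [q, Walk.support_map, deleteEdgesHomInl]
  calc d' (inl a) (inr ()) = d' (inl a) (inl x) + w' s(inl x, inr ()) :=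
        hd'.apply_eq_add_of_adj hq hxy' hr
    _ = d a x + w s(x, y) := by rw [hd.apply_inl_eq hd' hT' hw' ⟨p.toDeleteEdge _ he⟩, hw'x]
    _ = d a y := (hd.apply_eq_add_of_adj hp hxy hy).symm

end Subdivision

end SimpleGraph

/-- `min ∅ = +∞` is realised as `sInf ∅ = ⊤` in `EReal`. -/
noncomputable def resolution {V : Type*} {k : ℕ} (U S : Fin k → Set V) (d : V → V → ℝ) :
    EReal :=
  sInf {r : EReal | ∃ (i j : Fin k) (u si sj : V), u ∈ U i ∧ u ∈ U j ∧ si ∈ S i ∧ sj ∈ S j ∧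
    0 < d si u - d sj u ∧ r = ((d si u - d sj u : ℝ) : EReal)}

lemma resolution_le_resolution_of_forall_mem {V V' : Type*} {k : ℕ} {U S : Fin k → Set V}
    {d : V → V → ℝ} {U' : Fin k → Set V'} {d' : V' → V' → ℝ} (ι : V → V') (ρ : V' → V)
    (h : ∀ i a, a ∈ U' i → ρ a ∈ U i ∧ ∀ s ∈ S i, d' (ι s) a = d s (ρ a)) :
    resolution U S d ≤ resolution U' (fun i => ι '' S i) d' := by
  apply sInf_le_sInf
  rintro r ⟨i, j, a, _, _, hai, haj, ⟨si, hsi, rfl⟩, ⟨sj, hsj, rfl⟩, hpos, rfl⟩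
  obtain ⟨hui, hdi⟩ := h i a hai
  obtain ⟨huj, hdj⟩ := h j a haj
  rw [hdi si hsi, hdj sj hsj] at hpos ⊢
  exact ⟨i, j, ρ a, si, sj, hui, huj, hsi, hsj, hpos, rfl⟩

/-- `Sum.inr ()` is the subdivision vertex `y'` of the edge `xy`. -/
theorem expansion_resolution_mono_general
    {V : Type*} (T : SimpleGraph V) (hT : T.IsTree)
    (w : Sym2 V → ℝ)
    (d : V → V → ℝ)
    (hd : ∀ (u v : V) (p : T.Walk u v), p.IsPath → (p.edges.map w).sum = d u v)
    (k : ℕ) (U S : Fin k → Set V)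
    (hSW : ∀ i, S i ⊆ U i \ ⋃ (j) (_ : j ≠ i), U j)
    (hUconn : ∀ i, (T.induce (U i)).Connected)
    (i₀ : Fin k)
    (hWconn : (T.induce (U i₀ \ ⋃ (j) (_ : j ≠ i₀), U j)).Connected)
    (x y : V) (hxy : T.Adj x y)
    (hx : x ∈ U i₀ \ ⋃ (j) (_ : j ≠ i₀), U j)
    (hyU : y ∈ U i₀) (hyW : y ∉ U i₀ \ ⋃ (j) (_ : j ≠ i₀), U j)
    -- the expanded tree `T'`
    (T' : SimpleGraph (V ⊕ Unit))
    (hT'adj : ∀ a b : V ⊕ Unit, T'.Adj a b ↔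
      ((∃ u v : V, a = Sum.inl u ∧ b = Sum.inl v ∧ T.Adj u v ∧ s(u, v) ≠ s(x, y)) ∨
        (a = Sum.inl x ∧ b = Sum.inr ()) ∨ (a = Sum.inr () ∧ b = Sum.inl x) ∨
        (a = Sum.inl y ∧ b = Sum.inr ()) ∨ (a = Sum.inr () ∧ b = Sum.inl y)))
    -- its edge-lengths
    (w' : Sym2 (V ⊕ Unit) → ℝ)
    (hw'old : ∀ u v : V, w' s(Sum.inl u, Sum.inl v) = w s(u, v))
    (hw'x : w' s(Sum.inl x, Sum.inr ()) = w s(x, y))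
    -- its tree distance
    (d' : V ⊕ Unit → V ⊕ Unit → ℝ)
    (hd' : ∀ (a b : V ⊕ Unit) (p : T'.Walk a b), p.IsPath → (p.edges.map w').sum = d' a b)
    -- the modified cell `U'₁` and the cells of the expanded instance
    (U₁' : Set (V ⊕ Unit))
    (hU₁' : U₁' = {Sum.inr ()} ∪
      Sum.inl '' {u | u ∈ U i₀ ∧ ∀ p : T.Walk u x, p.IsPath → y ∉ p.support})
    (U' : Fin k → Set (V ⊕ Unit))
    (hU' : ∀ i, U' i = if i = i₀ then U₁' else (Sum.inl '' U i : Set (V ⊕ Unit))) :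
    sInf {r : EReal | ∃ (i j : Fin k) (u si sj : V),
        u ∈ U i ∧ u ∈ U j ∧ si ∈ S i ∧ sj ∈ S j ∧
        0 < d si u - d sj u ∧ r = ((d si u - d sj u : ℝ) : EReal)} ≤
      sInf {r : EReal | ∃ (i j : Fin k) (a si sj : V ⊕ Unit),
        a ∈ U' i ∧ a ∈ U' j ∧ si ∈ (Sum.inl '' S i : Set (V ⊕ Unit)) ∧
        sj ∈ (Sum.inl '' S j : Set (V ⊕ Unit)) ∧
        0 < d' si a - d' sj a ∧ r = ((d' si a - d' sj a : ℝ) : EReal)} := by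
  have hT'old : ∀ u v, T.Adj u v → s(u, v) ≠ s(x, y) → T'.Adj (inl u) (inl v) :=
    fun u v huv hne => (hT'adj _ _).2 (Or.inl ⟨u, v, rfl, rfl, huv, hne⟩)
  have hxy' : T'.Adj (inl x) (inr ()) := (hT'adj _ _).2 (Or.inr (Or.inl ⟨rfl, rfl⟩))
  have dist_inl : ∀ {a b}, (T.deleteEdges {s(x, y)}).Reachable a b → d' (inl a) (inl b) = d a b :=
    IsPathDist.apply_inl_eq hd hd' hT'old hw'old
  have reach_x : ∀ s ∈ S i₀, (T.deleteEdges {s(x, y)}).Reachable s x := fun s hs =>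
    reachable_deleteEdges_of_preconnected_induce hWconn.preconnected (hSW i₀ hs) hx hyW
      (Sym2.mem_mk_right x y)
  refine resolution_le_resolution_of_forall_mem inl (Sum.elim id fun _ => y) fun i a ha => ?_
  rw [hU'] at ha
  split_ifs at ha with hi
  · subst hi
    rcases hU₁' ▸ ha with rfl | ⟨u, ⟨hu, hux⟩, rfl⟩
    · refine ⟨hyU, fun s hs => ?_⟩
      obtain ⟨p, hp, hpW⟩ :=
        exists_isPath_support_subset_of_preconnected_induce hWconn.preconnected (hSW i hs) hx
      exact IsPathDist.apply_inl_inr_eq hd hd' hT'old hw'old hxy hxy' hw'x hp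
        fun hy => hyW (hpW y hy)
    · exact ⟨hu, fun s hs => dist_inl ((reach_x s hs).trans
        ((hT.connected.preconnected u x).deleteEdges_of_forall_isPath hux).symm)⟩
  · obtain ⟨u, hu, rfl⟩ := ha
    have hxU : x ∉ U i := fun hxi => hx.2 (Set.mem_biUnion hi hxi)
    exact ⟨hu, fun s hs => dist_inl (reachable_deleteEdges_of_preconnected_induce
      (hUconn i).preconnected (hSW i hs).1 hu hxU (Sym2.mem_mk_left x y))⟩

/-- Expanding an edge `xy` (with `x ∈ W₁`, `y ∈ U₁ \ W₁`) of a tree instance of the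
Generalized Graphic Inverse Voronoi problem by `ε > 0` does not decrease the resolution:
`res(I') ≥ res(I)`.  The resolution is formalized as the infimum in `EReal` of the set of
positive differences `d(sᵢ,u) − d(sⱼ,u)` with `u ∈ Uᵢ ∩ Uⱼ`, `sᵢ ∈ Sᵢ`, `sⱼ ∈ Sⱼ`
(so that the infimum of the empty set is `+∞`, matching the convention `min ∅ = +∞`).

The expanded tree `T'` lives on `V ⊕ Unit`, where `Sum.inr ()` is the subdivision vertex
`y'`; the edge `xy'` keeps the length of `xy` and the new edge `yy'` has length `ε`.
`U'₁` consists of `y'` together with the vertices of `U₁` in the component of `T − y`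
containing `x` (those `u` whose path to `x` avoids `y`); all other data is unchanged. -/
theorem expansion_resolution_mono
    {V : Type*} [Fintype V] (T : SimpleGraph V) (hT : T.IsTree)
    (w : Sym2 V → ℝ) (hw : ∀ e ∈ T.edgeSet, 0 < w e)
    (d : V → V → ℝ)
    (hd : ∀ (u v : V) (p : T.Walk u v), p.IsPath → (p.edges.map w).sum = d u v)
    (k : ℕ) (U S : Fin k → Set V)
    (hcover : (⋃ i, U i) = Set.univ)
    (hSW : ∀ i, S i ⊆ U i \ ⋃ (j) (_ : j ≠ i), U j)
    (hUconn : ∀ i, (T.induce (U i)).Connected)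
    (i₀ : Fin k)
    (hWconn : (T.induce (U i₀ \ ⋃ (j) (_ : j ≠ i₀), U j)).Connected)
    (x y : V) (hxy : T.Adj x y)
    (hx : x ∈ U i₀ \ ⋃ (j) (_ : j ≠ i₀), U j)
    (hyU : y ∈ U i₀) (hyW : y ∉ U i₀ \ ⋃ (j) (_ : j ≠ i₀), U j)
    (ε : ℝ) (hε : 0 < ε)
    -- the expanded tree `T'`
    (T' : SimpleGraph (V ⊕ Unit))
    (hT'adj : ∀ a b : V ⊕ Unit, T'.Adj a b ↔
      ((∃ u v : V, a = Sum.inl u ∧ b = Sum.inl v ∧ T.Adj u v ∧ s(u, v) ≠ s(x, y)) ∨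
        (a = Sum.inl x ∧ b = Sum.inr ()) ∨ (a = Sum.inr () ∧ b = Sum.inl x) ∨
        (a = Sum.inl y ∧ b = Sum.inr ()) ∨ (a = Sum.inr () ∧ b = Sum.inl y)))
    -- its edge-lengths
    (w' : Sym2 (V ⊕ Unit) → ℝ)
    (hw'old : ∀ u v : V, w' s(Sum.inl u, Sum.inl v) = w s(u, v))
    (hw'x : w' s(Sum.inl x, Sum.inr ()) = w s(x, y))
    (hw'y : w' s(Sum.inl y, Sum.inr ()) = ε)
    -- its tree distance
    (d' : V ⊕ Unit → V ⊕ Unit → ℝ)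
    (hd' : ∀ (a b : V ⊕ Unit) (p : T'.Walk a b), p.IsPath → (p.edges.map w').sum = d' a b)
    -- the modified cell `U'₁` and the cells of the expanded instance
    (U₁' : Set (V ⊕ Unit))
    (hU₁' : U₁' = {Sum.inr ()} ∪
      Sum.inl '' {u | u ∈ U i₀ ∧ ∀ p : T.Walk u x, p.IsPath → y ∉ p.support})
    (U' : Fin k → Set (V ⊕ Unit))
    (hU' : ∀ i, U' i = if i = i₀ then U₁' else (Sum.inl '' U i : Set (V ⊕ Unit))) :
    sInf {r : EReal | ∃ (i j : Fin k) (u si sj : V),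
        u ∈ U i ∧ u ∈ U j ∧ si ∈ S i ∧ sj ∈ S j ∧
        0 < d si u - d sj u ∧ r = ((d si u - d sj u : ℝ) : EReal)} ≤
      sInf {r : EReal | ∃ (i j : Fin k) (a si sj : V ⊕ Unit),
        a ∈ U' i ∧ a ∈ U' j ∧ si ∈ (Sum.inl '' S i : Set (V ⊕ Unit)) ∧
        sj ∈ (Sum.inl '' S j : Set (V ⊕ Unit)) ∧
        0 < d' si a - d' sj a ∧ r = ((d' si a - d' sj a : ℝ) : EReal)} :=
  expansion_resolution_mono_general T hT w d hd k U S hSW hUconn i₀ hWconn x y hxy hx hyU hyW T'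
    hT'adj w' hw'old hw'x d' hd' U₁' hU₁' U' hU'
end

section
/- Suppose 0 < δ < res'(I)/(6n) and let π be the projection π(a_{u,v}) = u. Then for every i ∈ {1,…,k} and all vertices u,v ∈ U'_i, one has d_T(π(u),π(v)) ≤ d_{T'}(u,v) < d_T(π(u),π(v)) + 2nδ'. -/
/-!
A path of `T` from `π a` to `π b` inside the connected cell `U i` lifts to a path of `T'`: each
of its edges `uv` becomes the edge `a_{u,v} a_{v,u}`, of the full length `λ(uv)` because `u` and
`v` lie in the same cell, and consecutive such edges are joined inside the gadget of their common
vertex `v`, a path of `δ'`-edges, by fewer than `deg v` edges. As `T'` is a tree, the lifted path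
gives `d_{T'}(a, b) = d_T(π a, π b) + t δ'`, where `t < ∑ v, deg v = 2 (n - 1)`.
-/

/-- `a` and `b` occur consecutively (in this order) in the list `l`. -/
def ConsecIn {V : Type*} (l : List V) (a b : V) : Prop :=
  ∃ m : ℕ, l[m]? = some a ∧ l[m + 1]? = some b

open SimpleGraph

theorem List.isChain_of_consecIn {α : Type*} {R : α → α → Prop} {l : List α}
    (h : ∀ a b, ConsecIn l a b → R a b) : l.IsChain R :=
  List.isChain_iff_getElem.2 fun i hi =>
    h _ _ ⟨i, List.getElem?_eq_getElem (by omega), List.getElem?_eq_getElem hi⟩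

theorem List.IsChain.exists_walk_support_subset {W : Type*} {G : SimpleGraph W} {l : List W}
    (hl : l.IsChain G.Adj) {x y : W} (hx : x ∈ l) (hy : y ∈ l) :
    ∃ q : G.Walk x y, q.support ⊆ l := by
  classical
  have hne : l ≠ [] := List.ne_nil_of_mem hx
  set p := Walk.ofSupport l hne hl
  rw [← Walk.support_ofSupport hne hl] at hx hy ⊢
  refine ⟨(p.dropUntil x hx).append (p.dropUntil y hy).reverse, fun c hc => ?_⟩
  rw [Walk.mem_support_append_iff, Walk.support_reverse, List.mem_reverse] at hc
  exact hc.elim (p.support_dropUntil_subset_support hx ·) (p.support_dropUntil_subset_support hy ·)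

theorem SimpleGraph.Preconnected.exists_isPath_support_subset {V : Type*} {G : SimpleGraph V}
    {s : Set V} (hs : (G.induce s).Preconnected) {u v : V} (hu : u ∈ s) (hv : v ∈ s) :
    ∃ p : G.Walk u v, p.IsPath ∧ ∀ x ∈ p.support, x ∈ s := by
  classical
  obtain ⟨q⟩ := hs ⟨u, hu⟩ ⟨v, hv⟩
  let p := q.map (Embedding.induce s).toHom
  refine ⟨p.bypass, p.bypass_isPath, fun x hx => ?_⟩
  obtain ⟨c, -, rfl⟩ := List.mem_map.1 (Walk.support_map _ q ▸ p.support_bypass_subset_support hx)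
  exact c.2

theorem SimpleGraph.Walk.IsPath.sum_degree_support_le {V : Type*} [Fintype V] {G : SimpleGraph V}
    [DecidableRel G.Adj] {u v : V} {p : G.Walk u v} (hp : p.IsPath) :
    (p.support.map fun v => G.degree v).sum ≤ 2 * G.edgeFinset.card := by
  classical
  rw [← sum_degrees_eq_twice_card_edges, ← List.sum_toFinset _ hp.support_nodup]
  exact Finset.sum_le_sum_of_subset (Finset.subset_univ _)

/-- `⟨(u, v), _⟩` is the vertex `a_{u,v}` of the transformed tree and `π` is `fun a => a.1.1`;
the vertices `⟨(u, _), _⟩` form the *gadget* of `u`. -/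
abbrev SplitVertex {V : Type*} (T : SimpleGraph V) := {p : V × V // T.Adj p.1 p.2}

section SplitVertex

variable {V : Type*} {T : SimpleGraph V} {T' : SimpleGraph (SplitVertex T)}
  {w' : Sym2 (SplitVertex T) → ℝ} {δ' : ℝ} {u : V}

theorem sum_edges_eq_length_mul_of_support_fst_eq
    (hw' : ∀ a b : SplitVertex T, a.1.1 = b.1.1 → a ≠ b → w' s(a, b) = δ') :
    ∀ {a b : SplitVertex T} (q : T'.Walk a b), (∀ c ∈ q.support, c.1.1 = u) →
      (q.edges.map w').sum = q.length * δ'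
  | _, _, .nil, _ => by simp
  | _, _, .cons h q, hq => by
    have hrest := sum_edges_eq_length_mul_of_support_fst_eq hw' q
      fun c hc => hq c (List.mem_cons_of_mem _ hc)
    rw [Walk.edges_cons, List.map_cons, List.sum_cons, hrest,
      hw' _ _ ((hq _ (by simp)).trans (hq _ (by simp)).symm) h.ne, Walk.length_cons]
    push_cast
    ring

theorem length_lt_degree_of_isPath_of_support_fst_eq [Fintype (T.neighborSet u)]
    {a b : SplitVertex T} {q : T'.Walk a b} (hq : q.IsPath) (hqu : ∀ c ∈ q.support, c.1.1 = u) :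
    q.length < T.degree u := by
  classical
  have hnodup : (q.support.map fun c => c.1.2).Nodup :=
    hq.support_nodup.map_on fun c hc c' hc' h =>
      Subtype.ext (Prod.ext ((hqu c hc).trans (hqu c' hc').symm) h)
  have hsub : (q.support.map fun c => c.1.2).toFinset ⊆ T.neighborFinset u := by
    intro v hv
    obtain ⟨c, hc, rfl⟩ := List.mem_map.1 (List.mem_toFinset.1 hv)
    rw [mem_neighborFinset, ← hqu c hc]
    exact c.2
  have := Finset.card_le_card hsub
  rw [List.toFinset_card_of_nodup hnodup, List.length_map, Walk.length_support,
    card_neighborFinset_eq_degree] at this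
  omega

theorem exists_isPath_gadget [Fintype (T.neighborSet u)] {l : List V}
    (hl : ∀ v, v ∈ l ↔ T.Adj u v)
    (hconsec : ∀ x y, ConsecIn l x y → ∀ (hx : T.Adj u x) (hy : T.Adj u y),
      T'.Adj ⟨(u, x), hx⟩ ⟨(u, y), hy⟩)
    (hw' : ∀ a b : SplitVertex T, a.1.1 = b.1.1 → a ≠ b → w' s(a, b) = δ')
    {x y : V} (hx : T.Adj u x) (hy : T.Adj u y) :
    ∃ q : T'.Walk ⟨(u, x), hx⟩ ⟨(u, y), hy⟩, q.IsPath ∧ (∀ c ∈ q.support, c.1.1 = u) ∧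
      (q.edges.map w').sum = q.length * δ' ∧ q.length < T.degree u := by
  classical
  let gadget : List (SplitVertex T) :=
    l.pmap (fun v hv => ⟨(u, v), hv⟩) fun v hv => (hl v).1 hv
  have hchain : gadget.IsChain T'.Adj :=
    List.isChain_pmap_of_isChain (R := fun x y => ∀ hx hy, T'.Adj ⟨(u, x), hx⟩ ⟨(u, y), hy⟩)
      (fun _ _ hx hy h => h hx hy) (List.isChain_of_consecIn hconsec) _
  have hmem : ∀ v (hv : T.Adj u v), (⟨(u, v), hv⟩ : SplitVertex T) ∈ gadget :=
    fun v hv => List.mem_pmap.2 ⟨v, (hl v).2 hv, rfl⟩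
  obtain ⟨q, hq⟩ := hchain.exists_walk_support_subset (hmem x hx) (hmem y hy)
  have hqu : ∀ c ∈ q.bypass.support, c.1.1 = u := fun c hc => by
    obtain ⟨v, -, rfl⟩ := List.mem_pmap.1 (hq (q.support_bypass_subset_support hc))
    rfl
  exact ⟨q.bypass, q.bypass_isPath, hqu, sum_edges_eq_length_mul_of_support_fst_eq hw' _ hqu,
    length_lt_degree_of_isPath_of_support_fst_eq q.bypass_isPath hqu⟩

theorem exists_isPath_lift [T.LocallyFinite] {S : Set V} {w : Sym2 V → ℝ}
    (hcross : ∀ v v' (h : T.Adj v v'), T'.Adj ⟨(v, v'), h⟩ ⟨(v', v), h.symm⟩)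
    (hgadget : ∀ v x y (hx : T.Adj v x) (hy : T.Adj v y),
      ∃ q : T'.Walk ⟨(v, x), hx⟩ ⟨(v, y), hy⟩, q.IsPath ∧ (∀ c ∈ q.support, c.1.1 = v) ∧
        (q.edges.map w').sum = q.length * δ' ∧ q.length < T.degree v)
    (hw'cross : ∀ v v' (h : T.Adj v v'), v ∈ S → v' ∈ S →
      w' s(⟨(v, v'), h⟩, ⟨(v', v), h.symm⟩) = w s(v, v')) :
    ∀ {u z : V} (p : T.Walk u z), p.IsPath → (∀ v ∈ p.support, v ∈ S) →
      ∀ {x y : V} (hx : T.Adj u x) (hy : T.Adj z y),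
      ∃ q : T'.Walk ⟨(u, x), hx⟩ ⟨(z, y), hy⟩, q.IsPath ∧ (∀ c ∈ q.support, c.1.1 ∈ p.support) ∧
        ∃ t : ℕ, (q.edges.map w').sum = (p.edges.map w).sum + t * δ' ∧
          t + p.support.length ≤ (p.support.map fun v => T.degree v).sum
  | u, _, .nil, _, _, x, y, hx, hy => by
    obtain ⟨q, hq, hqu, hqw, hqt⟩ := hgadget u x y hx hy
    refine ⟨q, hq, fun c hc => by simp [hqu c hc], q.length, by simpa using hqw, ?_⟩
    simp only [Walk.support_nil, List.length_singleton, List.map_cons, List.map_nil,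
      List.sum_singleton]
    omega
  | u, _, .cons (v := u₁) h p, hp, hpS, x, y, hx, hy => by
    rw [Walk.cons_isPath_iff] at hp
    obtain ⟨q₁, hq₁, hq₁u, hq₁w, hq₁t⟩ := hgadget u x u₁ hx h
    obtain ⟨q₂, hq₂, hq₂p, t, hq₂w, ht⟩ := exists_isPath_lift hcross hgadget hw'cross p hp.1
      (fun v hv => hpS v (List.mem_cons_of_mem _ hv)) h.symm hy
    refine ⟨q₁.append (.cons (hcross u u₁ h) q₂), ?_, ?_, q₁.length + t, ?_, ?_⟩
    · rw [Walk.isPath_def, Walk.support_append, Walk.support_cons, List.tail_cons,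
        List.nodup_append]
      refine ⟨hq₁.support_nodup, hq₂.support_nodup, fun c hc₁ c' hc₂ hcc' => hp.2 ?_⟩
      rw [← hq₁u c hc₁, hcc']
      exact hq₂p c' hc₂
    · intro c hc
      rw [Walk.mem_support_append_iff, Walk.support_cons, List.mem_cons] at hc
      rw [Walk.support_cons, List.mem_cons]
      rcases hc with hc | rfl | hc
      · exact .inl (hq₁u c hc)
      · exact .inl (hq₁u _ q₁.end_mem_support)
      · exact .inr (hq₂p c hc)
    · rw [Walk.edges_append, Walk.edges_cons, List.map_append, List.sum_append, List.map_cons,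
        List.sum_cons, hq₁w, hq₂w, Walk.edges_cons, List.map_cons, List.sum_cons,
        hw'cross u u₁ h (hpS u (by simp)) (hpS u₁ (by simp))]
      push_cast
      ring
    · rw [Walk.support_cons, List.length_cons, List.map_cons, List.sum_cons]
      omega

end SplitVertex

theorem degree_three_transform_dist_same_cell_general
    {V : Type*} [Fintype V] (T : SimpleGraph V) (hT : T.IsTree)
    (w : Sym2 V → ℝ)
    (d : V → V → ℝ)
    (hd : ∀ (u v : V) (p : T.Walk u v), p.IsPath → (p.edges.map w).sum = d u v)
    (k : ℕ) (U : Fin k → Set V)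
    (hUconn : ∀ i, (T.induce (U i)).Connected)
    (δ δ' : ℝ) (hδ : 0 < δ)
    (hδ' : δ' = δ / (4 * Fintype.card V))
    -- an enumeration of the neighbours of each vertex
    (L : V → List V) (hLmem : ∀ u v, v ∈ L u ↔ T.Adj u v)
    -- the transformed tree `T'`
    (T' : SimpleGraph {p : V × V // T.Adj p.1 p.2})
    (hT'adj : ∀ a b : {p : V × V // T.Adj p.1 p.2}, T'.Adj a b ↔
      ((a.1.1 = b.1.2 ∧ a.1.2 = b.1.1) ∨
       (a.1.1 = b.1.1 ∧ (ConsecIn (L a.1.1) a.1.2 b.1.2 ∨ ConsecIn (L a.1.1) b.1.2 a.1.2))))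
    -- its edge-lengths
    (w' : Sym2 {p : V × V // T.Adj p.1 p.2} → ℝ)
    (hwsame : ∀ a b : {p : V × V // T.Adj p.1 p.2}, a.1.1 = b.1.2 → a.1.2 = b.1.1 →
      (∃ i, a.1.1 ∈ U i ∧ a.1.2 ∈ U i) → w' s(a, b) = w s(a.1.1, a.1.2))
    (hwpath : ∀ a b : {p : V × V // T.Adj p.1 p.2}, a.1.1 = b.1.1 → a ≠ b →
      w' s(a, b) = δ')
    -- its tree distance
    (d' : {p : V × V // T.Adj p.1 p.2} → {p : V × V // T.Adj p.1 p.2} → ℝ)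
    (hd' : ∀ (a b : {p : V × V // T.Adj p.1 p.2}) (p : T'.Walk a b), p.IsPath →
      (p.edges.map w').sum = d' a b) :
    ∀ (i : Fin k) (a b : {p : V × V // T.Adj p.1 p.2}), a.1.1 ∈ U i → b.1.1 ∈ U i →
      d a.1.1 b.1.1 ≤ d' a b ∧
      d' a b < d a.1.1 b.1.1 + 2 * Fintype.card V * δ' := by
  classical
  intro i a b ha hb
  obtain ⟨p, hp, hpU⟩ := (hUconn i).preconnected.exists_isPath_support_subset ha hb
  obtain ⟨q, hq, -, t, hqw, hbudget⟩ := exists_isPath_lift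
    (fun v v' _ => (hT'adj _ _).2 (.inl ⟨rfl, rfl⟩))
    (fun v _ _ hx hy => exists_isPath_gadget (hLmem v)
      (fun _ _ h _ _ => (hT'adj _ _).2 (.inr ⟨rfl, .inl h⟩)) hwpath hx hy)
    (fun v v' _ hv hv' => hwsame _ _ rfl rfl ⟨i, hv, hv'⟩) p hp hpU a.2 b.2
  have hd'ab : d' a b = d a.1.1 b.1.1 + t * δ' := by rw [← hd' a b q hq, hqw, hd _ _ p hp]
  have ht : (t : ℝ) < 2 * Fintype.card V := by
    have := hp.sum_degree_support_le
    have := hT.card_edgeFinset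
    have := p.length_support
    norm_cast
    omega
  have hδ'pos : 0 < δ' := by
    have : 0 < Fintype.card V := Fintype.card_pos_iff.2 ⟨a.1.1⟩
    rw [hδ']
    positivity
  rw [hd'ab]
  exact ⟨le_add_of_nonneg_right (by positivity), by gcongr⟩

/-- Transformation of a tree instance with pairwise disjoint cells into one of maximum
degree 3: distances within a single transformed cell.  The new tree `T'` has a vertex `a_{u,v}` for every ordered pair of adjacent
vertices of `T` (the subtype `{p : V × V // T.Adj p.1 p.2}`): `a_{u,v}` and `a_{v,u}` are
joined by an edge of length `λ(uv)` if `u,v` lie in a common cell `U i` and `λ(uv) − δ`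
otherwise, and for each `u` the vertices `a_{u,v}` are connected into a path (given by an
enumeration `L u` of the neighbours of `u`) whose edges all have length `δ' = δ/(4n)`.
The cells become `U'ᵢ = {a_{u,v} : u ∈ Uᵢ}` and `π(a_{u,v}) = u` is the projection.
If `0 < δ < res'(I)/(6n)`, then for every `i` and all `a, b ∈ U'ᵢ` we have
`d_T(π a, π b) ≤ d_{T'}(a, b) < d_T(π a, π b) + 2nδ'`. -/
theorem degree_three_transform_dist_same_cell
    {V : Type*} [Fintype V] [DecidableEq V] (T : SimpleGraph V) (hT : T.IsTree)
    (hn : 2 ≤ Fintype.card V)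
    (w : Sym2 V → ℝ) (hw : ∀ e ∈ T.edgeSet, 0 < w e)
    (d : V → V → ℝ)
    (hd : ∀ (u v : V) (p : T.Walk u v), p.IsPath → (p.edges.map w).sum = d u v)
    (k : ℕ) (U : Fin k → Set V)
    (hcover : (⋃ i, U i) = Set.univ)
    (hdisj : ∀ i j, i ≠ j → Disjoint (U i) (U j))
    (hUconn : ∀ i, (T.induce (U i)).Connected)
    -- the resolution `res'(I)`: the minimum positive difference of distances
    (resI : ℝ)
    (hres1 : ∀ v v' u : V, 0 < d v u - d v' u → resI ≤ d v u - d v' u)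
    (hres2 : ∃ v v' u : V, 0 < d v u - d v' u ∧ resI = d v u - d v' u)
    (δ δ' : ℝ) (hδ : 0 < δ) (hδres : δ < resI / (6 * Fintype.card V))
    (hδ' : δ' = δ / (4 * Fintype.card V))
    -- an enumeration of the neighbours of each vertex
    (L : V → List V) (hLnd : ∀ u, (L u).Nodup) (hLmem : ∀ u v, v ∈ L u ↔ T.Adj u v)
    -- the transformed tree `T'`
    (T' : SimpleGraph {p : V × V // T.Adj p.1 p.2})
    (hT'adj : ∀ a b : {p : V × V // T.Adj p.1 p.2}, T'.Adj a b ↔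
      ((a.1.1 = b.1.2 ∧ a.1.2 = b.1.1) ∨
       (a.1.1 = b.1.1 ∧ (ConsecIn (L a.1.1) a.1.2 b.1.2 ∨ ConsecIn (L a.1.1) b.1.2 a.1.2))))
    -- its edge-lengths
    (w' : Sym2 {p : V × V // T.Adj p.1 p.2} → ℝ)
    (hwsame : ∀ a b : {p : V × V // T.Adj p.1 p.2}, a.1.1 = b.1.2 → a.1.2 = b.1.1 →
      (∃ i, a.1.1 ∈ U i ∧ a.1.2 ∈ U i) → w' s(a, b) = w s(a.1.1, a.1.2))
    (hwdiff : ∀ a b : {p : V × V // T.Adj p.1 p.2}, a.1.1 = b.1.2 → a.1.2 = b.1.1 →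
      (¬ ∃ i, a.1.1 ∈ U i ∧ a.1.2 ∈ U i) → w' s(a, b) = w s(a.1.1, a.1.2) - δ)
    (hwpath : ∀ a b : {p : V × V // T.Adj p.1 p.2}, a.1.1 = b.1.1 → a ≠ b →
      w' s(a, b) = δ')
    -- its tree distance
    (d' : {p : V × V // T.Adj p.1 p.2} → {p : V × V // T.Adj p.1 p.2} → ℝ)
    (hd' : ∀ (a b : {p : V × V // T.Adj p.1 p.2}) (p : T'.Walk a b), p.IsPath →
      (p.edges.map w').sum = d' a b) :
    ∀ (i : Fin k) (a b : {p : V × V // T.Adj p.1 p.2}), a.1.1 ∈ U i → b.1.1 ∈ U i →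
      d a.1.1 b.1.1 ≤ d' a b ∧
      d' a b < d a.1.1 b.1.1 + 2 * Fintype.card V * δ' :=
  degree_three_transform_dist_same_cell_general T hT w d hd k U hUconn δ δ' hδ hδ' L hLmem T' hT'adj
    w' hwsame hwpath d' hd'
end

section
/- Suppose 0 < δ < res'(I)/(6n) and let π be the projection π(a_{u,v}) = u. Then for all distinct indices i,j ∈ {1,…,k} and all vertices u ∈ U'_i and v ∈ U'_j, one has d_T(π(u),π(v)) − nδ < d_{T'}(u,v) < d_T(π(u),π(v)) − δ + 2nδ'. -/
def SameCell {ι V : Type*} (U : ι → Set V) (u v : V) : Prop :=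
  ∃ i, u ∈ U i ∧ v ∈ U i

theorem List.isChain_consecIn {α : Type*} (l : List α) : l.IsChain (ConsecIn l) :=
  List.isChain_iff_getElem.2 fun i hi => ⟨i, by simp, by simp [hi]⟩

theorem List.Nodup.length_eq_degree {V : Type*} {T : SimpleGraph V} [Fintype V]
    [DecidableRel T.Adj] {u : V} {l : List V} (hl : l.Nodup) (hmem : ∀ v, v ∈ l ↔ T.Adj u v) :
    l.length = T.degree u := by
  classical
  rw [← List.toFinset_card_of_nodup hl, ← SimpleGraph.card_neighborFinset_eq_degree]
  congr 1
  ext v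
  simp [hmem]

namespace SimpleGraph

variable {V W : Type*} {T : SimpleGraph V} {G : SimpleGraph W}

theorem exists_isPath_of_isChain : ∀ {l : List W}, l.Nodup → l.IsChain G.Adj →
    ∀ ⦃x y : W⦄, x ∈ l → y ∈ l →
      ∃ p : G.Walk x y, p.IsPath ∧ (∀ z ∈ p.support, z ∈ l) ∧ p.length < l.length
  | [], _, _, _, _, hx, _ => absurd hx List.not_mem_nil
  | z :: l, hnd, hch, x, y, hx, hy => by
    have ih := exists_isPath_of_isChain (l := l) hnd.of_cons hch.tail
    have from_head : ∀ y ∈ z :: l, ∃ p : G.Walk z y,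
        p.IsPath ∧ (∀ v ∈ p.support, v ∈ z :: l) ∧ p.length < (z :: l).length := by
      intro y hy
      rcases List.mem_cons.1 hy with rfl | hy
      · exact ⟨.nil, .nil, by simp, by simp⟩
      obtain ⟨z', l', rfl⟩ := List.exists_cons_of_ne_nil (List.ne_nil_of_mem hy)
      obtain ⟨p, hp, hsupp, hlen⟩ := ih List.mem_cons_self hy
      have hz : z ∉ p.support := fun h => (List.nodup_cons.1 hnd).1 (hsupp z h)
      refine ⟨.cons (List.isChain_cons_cons.1 hch).1 p, hp.cons hz, ?_, ?_⟩
      · simpa using fun v hv => List.mem_cons_of_mem z (hsupp v hv)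
      · simpa using hlen
    rcases List.mem_cons.1 hx with rfl | hx
    · exact from_head y hy
    rcases List.mem_cons.1 hy with rfl | hy
    · obtain ⟨p, hp, hsupp, hlen⟩ := from_head x (by simp [hx])
      exact ⟨p.reverse, hp.reverse, by simpa using hsupp, by simpa using hlen⟩
    obtain ⟨p, hp, hsupp, hlen⟩ := ih hx hy
    refine ⟨p, hp, fun v hv => List.mem_cons_of_mem _ (hsupp v hv), ?_⟩
    simp only [List.length_cons]
    omega

theorem Walk.IsPath.sum_map_support_le [Fintype W] {f : W → ℕ} {x y : W} {p : G.Walk x y}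
    (hp : p.IsPath) : (p.support.map f).sum ≤ ∑ v, f v := by
  classical
  rw [← List.sum_toFinset _ hp.support_nodup]
  exact Finset.sum_le_sum_of_subset (Finset.subset_univ _)

theorem IsTree.sum_degrees_lt [Fintype W] [DecidableRel G.Adj] (hG : G.IsTree) :
    ∑ v, G.degree v < 2 * Fintype.card W := by
  rw [sum_degrees_eq_twice_card_edges, ← hG.card_edgeFinset]
  omega

theorem Walk.sum_map_edges_eq_length_mul {x y : W} (q : G.Walk x y) (w' : Sym2 W → ℝ) (r : ℝ)
    (hw' : ∀ e ∈ q.edges, w' e = r) : (q.edges.map w').sum = q.length * r := by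
  rw [List.map_congr_left hw', List.map_const', List.sum_replicate, Walk.length_edges,
    nsmul_eq_mul]

open Function in
theorem Walk.exists_dart_not_sameCell {ι : Type*} {U : ι → Set V}
    (hdisj : Pairwise (Disjoint on U)) {u v : V} (p : T.Walk u v) {i j : ι}
    (hu : u ∈ U i) (hv : v ∈ U j) (hij : i ≠ j) : ∃ d ∈ p.darts, ¬ SameCell U d.fst d.snd := by
  induction p generalizing i with
  | nil => exact absurd (Set.disjoint_left.1 (hdisj hij) hu hv) not_false
  | @cons u x v h p ih =>
    by_cases hux : SameCell U u x
    · obtain ⟨i₀, hu₀, hx₀⟩ := hux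
      obtain rfl : i₀ = i := by_contra fun hne => Set.disjoint_left.1 (hdisj hne) hu₀ hu
      obtain ⟨d, hd, hcr⟩ := ih hx₀ hv hij
      exact ⟨d, by simp [hd], hcr⟩
    · exact ⟨⟨(u, x), h⟩, by simp, hux⟩

theorem Walk.IsPath.exists_isPath_lift (π : W → V) (deg : V → ℕ) (same : V → V → Prop)
    (w : Sym2 V → ℝ) (w' : Sym2 W → ℝ) (δ δ' : ℝ)
    (hfibre : ∀ a b, π a = π b → ∃ q : G.Walk a b, q.IsPath ∧ (∀ y ∈ q.support, π y = π a) ∧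
      q.length < deg (π a) ∧ (q.edges.map w').sum = q.length * δ')
    (hlift : ∀ u x, T.Adj u x → ∃ a b, π a = u ∧ π b = x ∧ G.Adj a b ∧
      (same u x → w' s(a, b) = w s(u, x)) ∧ (¬ same u x → w' s(a, b) = w s(u, x) - δ))
    {u v : V} {p : T.Walk u v} (hp : p.IsPath) (a b : W) (ha : π a = u) (hb : π b = v) :
    ∃ q : G.Walk a b, q.IsPath ∧ (∀ y ∈ q.support, π y ∈ p.support) ∧
      ∃ c s : ℕ, c ≤ p.length ∧ ((∃ d ∈ p.darts, ¬ same d.fst d.snd) → 1 ≤ c) ∧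
        s < (p.support.map deg).sum ∧
        (q.edges.map w').sum = (p.edges.map w).sum - c * δ + s * δ' := by
  classical
  induction p generalizing a with
  | nil =>
    obtain ⟨q, hq, hsupp, hlen, hsum⟩ := hfibre a b (ha.trans hb.symm)
    exact ⟨q, hq, by simpa [ha] using hsupp, 0, q.length, le_rfl, by simp,
      by simpa [ha] using hlen, by simp [hsum]⟩
  | @cons u x v h p ih =>
    obtain ⟨hp, hu⟩ := (Walk.cons_isPath_iff h p).1 hp
    obtain ⟨a₀, b₀, ha₀, hb₀, hadj, hsame, hcross⟩ := hlift u x h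
    obtain ⟨q₁, hq₁, hsupp₁, hlen₁, hsum₁⟩ := hfibre a a₀ (ha.trans ha₀.symm)
    obtain ⟨q₂, hq₂, hsupp₂, c, s, hc, hc₁, hs, hsum₂⟩ := ih hp b₀ hb₀ hb
    have hq : (q₁.append (.cons hadj q₂)).IsPath := by
      rw [Walk.isPath_def, Walk.support_append, Walk.support_cons, List.tail_cons]
      refine hq₁.support_nodup.append hq₂.support_nodup fun y hy₁ hy₂ => hu ?_
      simpa [hsupp₁ y hy₁, ha] using hsupp₂ y hy₂
    refine ⟨q₁.append (.cons hadj q₂), hq, ?_, c + if same u x then 0 else 1, q₁.length + s,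
      ?_, ?_, ?_, ?_⟩
    · intro y hy
      rw [Walk.support_append, Walk.support_cons, List.tail_cons, List.mem_append] at hy
      rcases hy with hy | hy
      · simp [hsupp₁ y hy, ha]
      · simp [hsupp₂ y hy]
    · split_ifs <;> simp only [Walk.length_cons] <;> omega
    · rintro ⟨d, hd, hcr⟩
      rw [Walk.darts_cons, List.mem_cons] at hd
      rcases hd with rfl | hd
      · simp [hcr]
      · have := hc₁ ⟨d, hd, hcr⟩
        omega
    · simp only [Walk.support_cons, List.map_cons, List.sum_cons]
      rw [ha] at hlen₁
      omega
    · rw [Walk.edges_append, Walk.edges_cons, List.map_append, List.map_cons, List.sum_append,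
        List.sum_cons, hsum₁, hsum₂, Walk.edges_cons, List.map_cons, List.sum_cons]
      by_cases hux : same u x
      · rw [hsame hux, if_pos hux]
        push_cast
        ring
      · rw [hcross hux, if_neg hux]
        push_cast
        ring

end SimpleGraph

theorem SimpleGraph.exists_isPath_of_fst_eq {V : Type*} {T : SimpleGraph V} {L : V → List V}
    {T' : SimpleGraph {p : V × V // T.Adj p.1 p.2}} (hLnd : ∀ u, (L u).Nodup)
    (hLmem : ∀ u v, v ∈ L u ↔ T.Adj u v)
    (hconsec : ∀ a b : {p : V × V // T.Adj p.1 p.2}, a.1.1 = b.1.1 →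
      ConsecIn (L a.1.1) a.1.2 b.1.2 → T'.Adj a b)
    (w' : Sym2 {p : V × V // T.Adj p.1 p.2} → ℝ) (δ' : ℝ)
    (hwpath : ∀ a b : {p : V × V // T.Adj p.1 p.2}, a.1.1 = b.1.1 → a ≠ b → w' s(a, b) = δ')
    (a b : {p : V × V // T.Adj p.1 p.2}) (hab : a.1.1 = b.1.1) :
    ∃ q : T'.Walk a b, q.IsPath ∧ (∀ y ∈ q.support, y.1.1 = a.1.1) ∧
      q.length < (L a.1.1).length ∧ (q.edges.map w').sum = q.length * δ' := by
  set u := a.1.1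
  set l := (L u).pmap (fun v hv => (⟨(u, v), hv⟩ : {p : V × V // T.Adj p.1 p.2}))
    fun v hv => (hLmem u v).1 hv
  have hnd : l.Nodup := (hLnd u).pmap fun v _ v' _ h => by simpa using congrArg (·.1.2) h
  have hch : l.IsChain T'.Adj :=
    List.isChain_pmap_of_isChain
      (fun v v' hv hv' h => hconsec ⟨(u, v), hv⟩ ⟨(u, v'), hv'⟩ rfl h) (L u).isChain_consecIn _
  have hmem : ∀ c : {p : V × V // T.Adj p.1 p.2}, c.1.1 = u → c ∈ l := fun c hc =>
    List.mem_pmap.2 ⟨c.1.2, (hLmem u _).2 (hc ▸ c.2), Subtype.ext (by ext <;> simp [hc])⟩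
  obtain ⟨q, hq, hsupp, hlen⟩ := exists_isPath_of_isChain hnd hch (hmem a rfl) (hmem b hab.symm)
  have hfst : ∀ y ∈ q.support, y.1.1 = u := fun y hy => by
    obtain ⟨v, hv, rfl⟩ := List.mem_pmap.1 (hsupp y hy)
    rfl
  refine ⟨q, hq, hfst, by simpa [l] using hlen, q.sum_map_edges_eq_length_mul w' δ' ?_⟩
  intro e he
  induction e using Sym2.ind with
  | h x y =>
    exact hwpath x y ((hfst x (q.fst_mem_support_of_mem_edges he)).trans
      (hfst y (q.snd_mem_support_of_mem_edges he)).symm) (q.adj_of_mem_edges he).ne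

theorem degree_three_transform_dist_diff_cell_general
    {V : Type*} [Fintype V] (T : SimpleGraph V) (hT : T.IsTree)
    (w : Sym2 V → ℝ)
    (d : V → V → ℝ)
    (hd : ∀ (u v : V) (p : T.Walk u v), p.IsPath → (p.edges.map w).sum = d u v)
    (k : ℕ) (U : Fin k → Set V)
    (hdisj : ∀ i j, i ≠ j → Disjoint (U i) (U j))
    (δ δ' : ℝ) (hδ : 0 < δ)
    (hδ' : δ' = δ / (4 * Fintype.card V))
    -- an enumeration of the neighbours of each vertex
    (L : V → List V) (hLnd : ∀ u, (L u).Nodup) (hLmem : ∀ u v, v ∈ L u ↔ T.Adj u v)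
    -- the transformed tree `T'`
    (T' : SimpleGraph {p : V × V // T.Adj p.1 p.2})
    (hT'adj : ∀ a b : {p : V × V // T.Adj p.1 p.2}, T'.Adj a b ↔
      ((a.1.1 = b.1.2 ∧ a.1.2 = b.1.1) ∨
       (a.1.1 = b.1.1 ∧ (ConsecIn (L a.1.1) a.1.2 b.1.2 ∨ ConsecIn (L a.1.1) b.1.2 a.1.2))))
    -- its edge-lengths
    (w' : Sym2 {p : V × V // T.Adj p.1 p.2} → ℝ)
    (hwsame : ∀ a b : {p : V × V // T.Adj p.1 p.2}, a.1.1 = b.1.2 → a.1.2 = b.1.1 →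
      (∃ i, a.1.1 ∈ U i ∧ a.1.2 ∈ U i) → w' s(a, b) = w s(a.1.1, a.1.2))
    (hwdiff : ∀ a b : {p : V × V // T.Adj p.1 p.2}, a.1.1 = b.1.2 → a.1.2 = b.1.1 →
      (¬ ∃ i, a.1.1 ∈ U i ∧ a.1.2 ∈ U i) → w' s(a, b) = w s(a.1.1, a.1.2) - δ)
    (hwpath : ∀ a b : {p : V × V // T.Adj p.1 p.2}, a.1.1 = b.1.1 → a ≠ b →
      w' s(a, b) = δ')
    -- its tree distance
    (d' : {p : V × V // T.Adj p.1 p.2} → {p : V × V // T.Adj p.1 p.2} → ℝ)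
    (hd' : ∀ (a b : {p : V × V // T.Adj p.1 p.2}) (p : T'.Walk a b), p.IsPath →
      (p.edges.map w').sum = d' a b) :
    ∀ (i j : Fin k), i ≠ j →
      ∀ (a b : {p : V × V // T.Adj p.1 p.2}), a.1.1 ∈ U i → b.1.1 ∈ U j →
        d a.1.1 b.1.1 - Fintype.card V * δ < d' a b ∧
        d' a b < d a.1.1 b.1.1 - δ + 2 * Fintype.card V * δ' := by
  classical
  intro i j hij a b ha hb
  obtain ⟨p, hp⟩ : ∃ p : T.Walk a.1.1 b.1.1, p.IsPath := (hT.existsUnique_path _ _).exists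
  have hfibre := T.exists_isPath_of_fst_eq hLnd hLmem
    (fun a b h hab => (hT'adj a b).2 (.inr ⟨h, .inl hab⟩)) w' δ' hwpath
  obtain ⟨q, hq, -, c, s, hc, hc₁, hs, hsum⟩ := hp.exists_isPath_lift (fun a => a.1.1)
    (fun u => (L u).length) (SameCell U) w w' δ δ' hfibre
    (fun u x h => ⟨⟨(u, x), h⟩, ⟨(x, u), h.symm⟩, rfl, rfl, (hT'adj _ _).2 (.inl ⟨rfl, rfl⟩),
      hwsame ⟨(u, x), h⟩ ⟨(x, u), h.symm⟩ rfl rfl, hwdiff ⟨(u, x), h⟩ ⟨(x, u), h.symm⟩ rfl rfl⟩)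
    a b rfl rfl
  have hc₀ : 1 ≤ c := hc₁ (p.exists_dart_not_sameCell hdisj ha hb hij)
  have hcn : c < Fintype.card V := hc.trans_lt hp.length_lt
  have hsn : s < 2 * Fintype.card V := by
    refine hs.trans_le (hp.sum_map_support_le.trans (le_of_lt ?_))
    simpa only [(hLnd _).length_eq_degree (hLmem _)] using hT.sum_degrees_lt
  have hcard : (0 : ℝ) < Fintype.card V := by
    exact_mod_cast Fintype.card_pos_iff.2 ⟨a.1.1⟩
  have hδ'pos : 0 < δ' := hδ' ▸ by positivity
  rw [← hd' a b q hq, hsum, hd _ _ p hp]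
  have hcR : (c : ℝ) < Fintype.card V := by exact_mod_cast hcn
  have hc₀R : (1 : ℝ) ≤ c := by exact_mod_cast hc₀
  have hsR : (s : ℝ) < 2 * Fintype.card V := by exact_mod_cast hsn
  constructor <;> nlinarith

/-- Transformation of a tree instance with pairwise disjoint cells into one of maximum
degree 3: distances between two distinct transformed cells.  The new tree `T'` has a vertex `a_{u,v}` for every ordered pair of adjacent
vertices of `T` (the subtype `{p : V × V // T.Adj p.1 p.2}`): `a_{u,v}` and `a_{v,u}` are
joined by an edge of length `λ(uv)` if `u,v` lie in a common cell `U i` and `λ(uv) − δ`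
otherwise, and for each `u` the vertices `a_{u,v}` are connected into a path (given by an
enumeration `L u` of the neighbours of `u`) whose edges all have length `δ' = δ/(4n)`.
The cells become `U'ᵢ = {a_{u,v} : u ∈ Uᵢ}` and `π(a_{u,v}) = u` is the projection.
If `0 < δ < res'(I)/(6n)`, then for all distinct `i, j`, `a ∈ U'ᵢ` and `b ∈ U'ⱼ` we have
`d_T(π a, π b) − nδ < d_{T'}(a, b) < d_T(π a, π b) − δ + 2nδ'`. -/
theorem degree_three_transform_dist_diff_cell
    {V : Type*} [Fintype V] [DecidableEq V] (T : SimpleGraph V) (hT : T.IsTree)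
    (hn : 2 ≤ Fintype.card V)
    (w : Sym2 V → ℝ) (hw : ∀ e ∈ T.edgeSet, 0 < w e)
    (d : V → V → ℝ)
    (hd : ∀ (u v : V) (p : T.Walk u v), p.IsPath → (p.edges.map w).sum = d u v)
    (k : ℕ) (U : Fin k → Set V)
    (hcover : (⋃ i, U i) = Set.univ)
    (hdisj : ∀ i j, i ≠ j → Disjoint (U i) (U j))
    (hUconn : ∀ i, (T.induce (U i)).Connected)
    -- the resolution `res'(I)`: the minimum positive difference of distances
    (resI : ℝ)
    (hres1 : ∀ v v' u : V, 0 < d v u - d v' u → resI ≤ d v u - d v' u)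
    (hres2 : ∃ v v' u : V, 0 < d v u - d v' u ∧ resI = d v u - d v' u)
    (δ δ' : ℝ) (hδ : 0 < δ) (hδres : δ < resI / (6 * Fintype.card V))
    (hδ' : δ' = δ / (4 * Fintype.card V))
    -- an enumeration of the neighbours of each vertex
    (L : V → List V) (hLnd : ∀ u, (L u).Nodup) (hLmem : ∀ u v, v ∈ L u ↔ T.Adj u v)
    -- the transformed tree `T'`
    (T' : SimpleGraph {p : V × V // T.Adj p.1 p.2})
    (hT'adj : ∀ a b : {p : V × V // T.Adj p.1 p.2}, T'.Adj a b ↔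
      ((a.1.1 = b.1.2 ∧ a.1.2 = b.1.1) ∨
       (a.1.1 = b.1.1 ∧ (ConsecIn (L a.1.1) a.1.2 b.1.2 ∨ ConsecIn (L a.1.1) b.1.2 a.1.2))))
    -- its edge-lengths
    (w' : Sym2 {p : V × V // T.Adj p.1 p.2} → ℝ)
    (hwsame : ∀ a b : {p : V × V // T.Adj p.1 p.2}, a.1.1 = b.1.2 → a.1.2 = b.1.1 →
      (∃ i, a.1.1 ∈ U i ∧ a.1.2 ∈ U i) → w' s(a, b) = w s(a.1.1, a.1.2))
    (hwdiff : ∀ a b : {p : V × V // T.Adj p.1 p.2}, a.1.1 = b.1.2 → a.1.2 = b.1.1 →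
      (¬ ∃ i, a.1.1 ∈ U i ∧ a.1.2 ∈ U i) → w' s(a, b) = w s(a.1.1, a.1.2) - δ)
    (hwpath : ∀ a b : {p : V × V // T.Adj p.1 p.2}, a.1.1 = b.1.1 → a ≠ b →
      w' s(a, b) = δ')
    -- its tree distance
    (d' : {p : V × V // T.Adj p.1 p.2} → {p : V × V // T.Adj p.1 p.2} → ℝ)
    (hd' : ∀ (a b : {p : V × V // T.Adj p.1 p.2}) (p : T'.Walk a b), p.IsPath →
      (p.edges.map w').sum = d' a b) :
    ∀ (i j : Fin k), i ≠ j →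
      ∀ (a b : {p : V × V // T.Adj p.1 p.2}), a.1.1 ∈ U i → b.1.1 ∈ U j →
        d a.1.1 b.1.1 - Fintype.card V * δ < d' a b ∧
        d' a b < d a.1.1 b.1.1 - δ + 2 * Fintype.card V * δ' :=
  degree_three_transform_dist_diff_cell_general T hT w d hd k U hdisj δ δ' hδ hδ' L hLnd hLmem T'
    hT'adj w' hwsame hwdiff hwpath d' hd'
end

section
/- Let v be a vertex of T with two children v_1 and v_2. Then A(v) = ℝ_{>0} ∩ (A'(v_1) ∩ A'(v_2)) if i(v) = i(v_1) = i(v_2); A(v) = ℝ_{>0} ∩ (A'(v_1) ∩ C'(v_2)) if i(v) = i(v_1) ≠ i(v_2); A(v) = ℝ_{>0} ∩ (A'(v_2) ∩ C'(v_1)) if i(v) = i(v_2) ≠ i(v_1); and A(v) = ℝ_{>0} ∩ (C'(v_1) ∩ C'(v_2)) if i(v) ≠ i(v_1) and i(v) ≠ i(v_2). -/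
/-- The vertex set of the subtree of `T` (rooted at `r`) rooted at `v`: those vertices `u`
such that `v` lies on the (unique) path in `T` from `r` to `u`. -/
def descend {V : Type*} (T : SimpleGraph V) (r v : V) : Set V :=
  {u | ∀ p : T.Walk r u, p.IsPath → v ∈ p.support}

/-- `J(v)`: the indices of cells meeting the subtree rooted at `v`. -/
def Jset {V : Type*} (T : SimpleGraph V) (r : V) {k : ℕ} (U : Fin k → Set V) (v : V) :
    Set (Fin k) :=
  {j | (U j ∩ descend T r v).Nonempty}

/-- `B(v)`: the set of distances `d(s_{i(v)}, v)` over all placements `(s_j)_{j ∈ J(v)}`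
of the sites inside the subtree `T(v)` realizing the cells `U_j ∩ T(v)` there. -/
def Bset {V : Type*} (T : SimpleGraph V) (r : V) (d : V → V → ℝ) {k : ℕ}
    (U S : Fin k → Set V) (iv : V → Fin k) (v : V) : Set ℝ :=
  {x | ∃ st : Fin k → V,
    (∀ j ∈ Jset T r U v, st j ∈ S j ∩ descend T r v) ∧
    (∀ j ∈ Jset T r U v,
      {u | u ∈ descend T r v ∧ ∀ t ∈ Jset T r U v, d (st j) u ≤ d (st t) u} =
        U j ∩ descend T r v) ∧
    x = d (st (iv v)) v}

/-- `A(v)`: the set of `α > 0` such that, placing the site of the cell of `v` on a new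
vertex `v_new` attached to `v` by an edge of length `α` (so at distance `α + d(v,u)` from
every `u ∈ T(v)`), the remaining sites can be placed with `s_j ∈ S_j` so that the Voronoi
cells within the subtree `T(v)` of the extended tree `T⁺_α(v)` are the `U_j ∩ T(v)`. -/
def Aset {V : Type*} (T : SimpleGraph V) (r : V) (d : V → V → ℝ) {k : ℕ}
    (U S : Fin k → Set V) (iv : V → Fin k) (v : V) : Set ℝ :=
  {α | 0 < α ∧ ∃ st : Fin k → V,
    (∀ j ∈ Jset T r U v, j ≠ iv v → st j ∈ S j) ∧
    (∀ j ∈ Jset T r U v, j ≠ iv v →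
      {u | u ∈ descend T r v ∧ (∀ t ∈ Jset T r U v, t ≠ iv v → d (st j) u ≤ d (st t) u) ∧
          d (st j) u ≤ α + d v u} = U j ∩ descend T r v) ∧
    {u | u ∈ descend T r v ∧ ∀ t ∈ Jset T r U v, t ≠ iv v → α + d v u ≤ d (st t) u} =
      U (iv v) ∩ descend T r v}

/-- `A'(c) = {x − λ(vc) : x ∈ A(c)}`, for a child `c` of `v`. -/
def Ashift {V : Type*} (T : SimpleGraph V) (r : V) (w : Sym2 V → ℝ) (d : V → V → ℝ)
    {k : ℕ} (U S : Fin k → Set V) (iv : V → Fin k) (v c : V) : Set ℝ :=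
  {x | ∃ y ∈ Aset T r d U S iv c, x = y - w s(v, c)}

/-- `B'(c) = {x + λ(vc) : x ∈ B(c)}`, for a child `c` of `v`. -/
def Bshift {V : Type*} (T : SimpleGraph V) (r : V) (w : Sym2 V → ℝ) (d : V → V → ℝ)
    {k : ℕ} (U S : Fin k → Set V) (iv : V → Fin k) (v c : V) : Set ℝ :=
  {x | ∃ y ∈ Bset T r d U S iv c, x = y + w s(v, c)}

/-- `C'(c) = ⋃_{x ∈ B(c)} (x − λ(vc), x + λ(vc))`, for a child `c` of `v`. -/
def Cshift {V : Type*} (T : SimpleGraph V) (r : V) (w : Sym2 V → ℝ) (d : V → V → ℝ)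
    {k : ℕ} (U S : Fin k → Set V) (iv : V → Fin k) (v c : V) : Set ℝ :=
  {α | ∃ y ∈ Bset T r d U S iv c, y - w s(v, c) < α ∧ α < y + w s(v, c)}

/-!
The subtree `T(v)` consists of `v` and the subtrees `T(c)` of its children, and every path
leaving `T(c)` passes through `v`. So a site `s` outside `T(c)` is at distance
`d(s, v) + d(v, u)` from each `u ∈ T(c)`: as long as every site is farther than `α` from `v`,
it loses all of `T(c)` to the virtual site of the cell of `v` (at distance `α + d(v, u)`), unless
it lies in `T(c)` itself. Hence a placement for `A(v)` is the same as a family of independent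
placements in the subtrees of the children, each keeping its sites farther than `α` from `v`.

For a child `c` in the cell of `v`, such a placement is one for `A(c)` with the virtual site at
distance `α + λ(vc)` from `c`. For a child `c` in another cell, nothing of `T(c)` may go to the
virtual site, so it is a placement for `B(c)` whose site `s` for the cell of `c` satisfies
`d(s, c) - λ(vc) < α` (the virtual site loses `c`) and `α < d(s, c) + λ(vc)` (`s` loses `v`).
-/

open SimpleGraph

namespace SimpleGraph.IsTree

variable {V : Type*} {T : SimpleGraph V} (hT : T.IsTree)

noncomputable def path (a b : V) : T.Walk a b :=
  (hT.existsUnique_path a b).exists.choose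

theorem path_isPath (a b : V) : (hT.path a b).IsPath :=
  (hT.existsUnique_path a b).exists.choose_spec

theorem eq_path {a b : V} {p : T.Walk a b} (hp : p.IsPath) : p = hT.path a b :=
  (hT.existsUnique_path a b).unique hp (hT.path_isPath a b)

end SimpleGraph.IsTree

def IsChild {V : Type*} (T : SimpleGraph V) (r v c : V) : Prop :=
  T.Adj v c ∧ c ∈ descend T r v

section Descend

variable {V : Type*} {T : SimpleGraph V} {r : V}

theorem mem_descend_self (x : V) : x ∈ descend T r x :=
  fun p _ => p.end_mem_support

variable (hT : T.IsTree)
include hT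

theorem mem_descend_iff {u x : V} : u ∈ descend T r x ↔ x ∈ (hT.path r u).support :=
  ⟨fun h => h _ (hT.path_isPath r u), fun h _ hp => hT.eq_path hp ▸ h⟩

theorem mem_support_of_mem_descend {x s t : V} (hs : s ∈ descend T r x)
    (ht : t ∉ descend T r x) (p : T.Walk s t) : x ∈ p.support := by
  classical
  rw [mem_descend_iff hT] at hs ht
  have hb := hT.eq_path ((hT.path r t).append p.reverse).bypass_isPath
  have := ((hT.path r t).append p.reverse).support_bypass_subset_support (hb ▸ hs)
  rw [Walk.mem_support_append_iff, Walk.support_reverse, List.mem_reverse] at this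
  exact this.resolve_left ht

theorem descend_subset_descend {x y : V} (hy : y ∈ descend T r x) :
    descend T r y ⊆ descend T r x := by
  classical
  intro u hu
  rw [mem_descend_iff hT] at hu hy ⊢
  rw [← hT.eq_path ((hT.path_isPath r u).takeUntil hu)] at hy
  exact (hT.path r u).support_takeUntil_subset_support hu hy

theorem path_eq_concat {a b : V} (h : T.Adj a b) (hb : b ∈ descend T r a) :
    hT.path r b = (hT.path r a).concat h := by
  classical
  have ha : a ∈ (hT.path r b).support := (mem_descend_iff hT).1 hb
  have hba : b ∉ (hT.path r a).support :=
    hT.eq_path ((hT.path_isPath r b).takeUntil ha) ▸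
      Walk.endpoint_notMem_support_takeUntil (hT.path_isPath r b) ha h.ne'
  exact (hT.eq_path ((hT.path_isPath r a).concat hba h)).symm

theorem mem_descend_or_mem_descend_of_adj {a b : V} (h : T.Adj a b) :
    b ∈ descend T r a ∨ a ∈ descend T r b := by
  by_cases hb : b ∈ (hT.path r a).support
  · exact Or.inr ((mem_descend_iff hT).2 hb)
  · left
    rw [mem_descend_iff hT, ← hT.eq_path ((hT.path_isPath r a).concat hb h),
      Walk.support_concat]
    exact List.mem_append_left _ (hT.path r a).end_mem_support

theorem exists_isChild_of_mem_descend {u v : V} (hu : u ∈ descend T r v) (huv : u ≠ v) :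
    ∃ c, IsChild T r v c ∧ u ∈ descend T r c := by
  classical
  have hv := (mem_descend_iff hT).1 hu
  obtain ⟨c, h, q, hq⟩ := Walk.exists_eq_cons_of_ne huv.symm ((hT.path r u).dropUntil v hv)
  have hpath := (hT.path_isPath r u).dropUntil hv
  rw [hq, Walk.cons_isPath_iff] at hpath
  refine ⟨c, ⟨h, ?_⟩, (mem_descend_iff hT).2 ?_⟩
  · by_contra hc
    -- the rest of the path from `v` to `u` would have to return through `v`
    have := mem_support_of_mem_descend hT hu hc q.reverse
    exact hpath.2 (by simpa using this)
  · exact (hT.path r u).support_dropUntil_subset_support hv (by simp [hq])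

end Descend

namespace IsChild

variable {V : Type*} {T : SimpleGraph V} {r v c c' : V} (hT : T.IsTree)
include hT

theorem path_eq (hc : IsChild T r v c) : hT.path r c = (hT.path r v).concat hc.1 :=
  path_eq_concat hT hc.1 hc.2

theorem notMem_support_path (hc : IsChild T r v c) : c ∉ (hT.path r v).support :=
  ((Walk.concat_isPath_iff hc.1).1 (hc.path_eq hT ▸ hT.path_isPath r c)).2

theorem notMem_descend (hc : IsChild T r v c) : v ∉ descend T r c :=
  fun h => hc.notMem_support_path hT ((mem_descend_iff hT).1 h)

theorem descend_subset (hc : IsChild T r v c) : descend T r c ⊆ descend T r v :=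
  descend_subset_descend hT hc.2

theorem mem_descend_of_adj (hc : IsChild T r v c) {s s' : V} (hs : s ∈ descend T r c)
    (h : T.Adj s s') (hs'v : s' ≠ v) : s' ∈ descend T r c := by
  by_contra hs'
  have hsc : c = s := by
    have := mem_support_of_mem_descend hT hs hs' (.cons h .nil)
    simp only [Walk.support_cons, Walk.support_nil, List.mem_cons, List.not_mem_nil,
      or_false] at this
    exact this.resolve_right fun hcs => hs' (hcs ▸ mem_descend_self c)
  subst hsc
  -- otherwise `s'` would be a second parent of `c`
  refine (mem_descend_or_mem_descend_of_adj hT h).elim hs' fun hcs' => hs'v ?_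
  have := (path_eq_concat hT h.symm hcs').symm.trans (hc.path_eq hT)
  exact (Walk.concat_inj this).1

theorem mem_descend_of_walk (hc : IsChild T r v c) {s t : V} (p : T.Walk s t)
    (hs : s ∈ descend T r c) (hv : v ∉ p.support) : t ∈ descend T r c := by
  induction p with
  | nil => exact hs
  | cons h q ih =>
    simp only [Walk.support_cons, List.mem_cons, not_or] at hv
    exact ih (hc.mem_descend_of_adj hT hs h fun h' => hv.2 (h' ▸ q.start_mem_support)) hv.2

theorem mem_support_of_walk (hc : IsChild T r v c) {s t : V} (hs : s ∈ descend T r c)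
    (ht : t ∉ descend T r c) (p : T.Walk s t) : v ∈ p.support := by
  by_contra hv
  exact ht (hc.mem_descend_of_walk hT p hs hv)

theorem notMem_descend_of_ne (hc : IsChild T r v c) (hc' : IsChild T r v c') (hne : c ≠ c') :
    c' ∉ descend T r c := by
  intro h
  rw [mem_descend_iff hT, hc'.path_eq hT, Walk.support_concat, List.mem_append,
    List.mem_singleton] at h
  exact h.elim (hc.notMem_support_path hT) hne

theorem disjoint_descend (hc : IsChild T r v c) (hc' : IsChild T r v c') (hne : c ≠ c') :
    Disjoint (descend T r c) (descend T r c') := by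
  classical
  refine Set.disjoint_left.2 fun u hu hu' => ?_
  have hv := hc.mem_support_of_walk hT hu (hc.notMem_descend_of_ne hT hc' hne) (hT.path u c')
  have hc'v := mem_support_of_mem_descend hT hu' (hc'.notMem_descend hT)
    ((hT.path u c').takeUntil v hv)
  exact Walk.endpoint_notMem_support_takeUntil (hT.path_isPath u c') hv hc'.1.ne' hc'v

end IsChild

def IsPathMetric {V : Type*} (T : SimpleGraph V) (w : Sym2 V → ℝ) (d : V → V → ℝ) : Prop :=
  ∀ (u v : V) (p : T.Walk u v), p.IsPath → (p.edges.map w).sum = d u v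

namespace IsPathMetric

variable {V : Type*} {T : SimpleGraph V} {w : Sym2 V → ℝ} {d : V → V → ℝ} {r v c : V}
  (hd : IsPathMetric T w d)
include hd

theorem self (a : V) : d a a = 0 := by
  simpa using (hd a a .nil .nil).symm

theorem adj {a b : V} (h : T.Adj a b) : d a b = w s(a, b) := by
  simpa using (hd a b (.cons h .nil) (by simp [h.ne])).symm

theorem eq_add_of_mem_support {a b x : V} {p : T.Walk a b} (hp : p.IsPath)
    (hx : x ∈ p.support) : d a b = d a x + d x b := by
  classical
  rw [← hd a b p hp, ← hd a x _ (hp.takeUntil hx), ← hd x b _ (hp.dropUntil hx)]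
  conv_lhs => rw [← p.take_spec hx]
  rw [Walk.edges_append, List.map_append, List.sum_append]

variable (hT : T.IsTree)
include hT

theorem symm (a b : V) : d a b = d b a := by
  rw [← hd a b _ (hT.path_isPath a b), ← hd b a _ (hT.path_isPath a b).reverse]
  simp [Walk.edges_reverse]

theorem eq_add_of_isChild (hc : IsChild T r v c) {s t : V} (hs : s ∈ descend T r c)
    (ht : t ∉ descend T r c) : d s t = d s v + d v t :=
  hd.eq_add_of_mem_support (hT.path_isPath s t) (hc.mem_support_of_walk hT hs ht _)

theorem eq_add_weight_of_isChild (hc : IsChild T r v c) {s : V} (hs : s ∈ descend T r c) :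
    d s v = d s c + w s(v, c) := by
  rw [hd.eq_add_of_mem_support (hT.path_isPath s v)
    (mem_support_of_mem_descend hT hs (hc.notMem_descend hT) _), hd.adj hc.1.symm, Sym2.eq_swap]

theorem eq_weight_add_of_isChild (hc : IsChild T r v c) {s : V} (hs : s ∈ descend T r c) :
    d v s = w s(v, c) + d c s := by
  rw [hd.symm hT, hd.eq_add_weight_of_isChild hT hc hs, hd.symm hT s c, add_comm]

variable (hw : ∀ e ∈ T.edgeSet, 0 < w e)
include hw

theorem nonneg (a b : V) : 0 ≤ d a b := by
  rw [← hd a b _ (hT.path_isPath a b)]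
  refine List.sum_nonneg fun x hx => ?_
  obtain ⟨e, he, rfl⟩ := List.mem_map.1 hx
  exact (hw e ((hT.path a b).edges_subset_edgeSet he)).le

theorem le_weight_add {a a' b : V} (h : T.Adj a a') : d a b ≤ w s(a, a') + d a' b := by
  by_cases ha : a ∈ (hT.path a' b).support
  · have := hd.eq_add_of_mem_support (hT.path_isPath a' b) ha
    linarith [hd.nonneg hT hw a' a, hw s(a, a') h]
  · have := hd _ _ _ ((hT.path_isPath a' b).cons ha (h := h))
    rw [← hd _ _ _ (hT.path_isPath a' b)]
    simp only [Walk.edges_cons, List.map_cons, List.sum_cons] at this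
    exact this.ge

theorem le_sum_edges {a b : V} (p : T.Walk a b) : d a b ≤ (p.edges.map w).sum := by
  induction p with
  | nil => simp [hd.self]
  | @cons a _ b h q ih =>
    simp only [Walk.edges_cons, List.map_cons, List.sum_cons]
    linarith [hd.le_weight_add hT hw h (b := b)]

theorem triangle (a x b : V) : d a b ≤ d a x + d x b := by
  have := hd.le_sum_edges hT hw ((hT.path a x).append (hT.path x b))
  rwa [Walk.edges_append, List.map_append, List.sum_append, hd _ _ _ (hT.path_isPath a x),
    hd _ _ _ (hT.path_isPath x b)] at this

end IsPathMetric

structure IsConnectedPartition {V : Type*} (T : SimpleGraph V) {k : ℕ} (U : Fin k → Set V)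
    (iv : V → Fin k) : Prop where
  disjoint : ∀ i j, i ≠ j → Disjoint (U i) (U j)
  connected : ∀ i, (T.induce (U i)).Connected
  mem : ∀ u, u ∈ U (iv u)

theorem SimpleGraph.Connected.exists_walk_support_subset {V : Type*} {T : SimpleGraph V}
    {s : Set V} (hs : (T.induce s).Connected) {a b : V} (ha : a ∈ s) (hb : b ∈ s) :
    ∃ p : T.Walk a b, ∀ x ∈ p.support, x ∈ s := by
  obtain ⟨q⟩ := hs.preconnected ⟨a, ha⟩ ⟨b, hb⟩
  refine ⟨q.map (Embedding.induce s).toHom, fun x hx => ?_⟩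
  have hx : x ∈ (q.map (Embedding.induce s).toHom).support := hx
  rw [Walk.support_map, List.mem_map] at hx
  obtain ⟨y, -, rfl⟩ := hx
  exact y.2

namespace IsConnectedPartition

variable {V : Type*} {T : SimpleGraph V} {k : ℕ} {U : Fin k → Set V} {iv : V → Fin k}
  (hU : IsConnectedPartition T U iv)
include hU

theorem notMem_of_ne {u : V} {j : Fin k} (h : j ≠ iv u) : u ∉ U j :=
  fun hu => Set.disjoint_left.1 (hU.disjoint _ _ h) hu (hU.mem u)

end IsConnectedPartition

namespace IsChild

variable {V : Type*} {T : SimpleGraph V} {r v c c' : V} {k : ℕ} {U : Fin k → Set V}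
  {iv : V → Fin k} {j : Fin k} (hT : T.IsTree)
include hT

theorem Jset_subset (hc : IsChild T r v c) : Jset T r U c ⊆ Jset T r U v :=
  fun _ ⟨u, hu, huc⟩ => ⟨u, hu, hc.descend_subset hT huc⟩

variable (hU : IsConnectedPartition T U iv)
include hU

theorem subset_descend_of_mem_Jset (hc : IsChild T r v c) (hj : j ∈ Jset T r U c)
    (hjv : j ≠ iv v) : U j ⊆ descend T r c := by
  obtain ⟨a, ha, hac⟩ := hj
  intro b hb
  obtain ⟨p, hp⟩ := (hU.connected j).exists_walk_support_subset ha hb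
  exact hc.mem_descend_of_walk hT p hac fun hv => hU.notMem_of_ne hjv (hp v hv)

theorem iv_eq_of_mem_Jset (hc : IsChild T r v c) (h : iv v ∈ Jset T r U c) : iv c = iv v := by
  obtain ⟨a, ha, hac⟩ := h
  obtain ⟨p, hp⟩ := (hU.connected (iv v)).exists_walk_support_subset ha (hU.mem v)
  by_contra hne
  exact hU.notMem_of_ne (Ne.symm hne)
    (hp c (mem_support_of_mem_descend hT hac (hc.notMem_descend hT) p))

theorem eq_of_mem_Jset (hc : IsChild T r v c) (hc' : IsChild T r v c') (hj : j ∈ Jset T r U c)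
    (hj' : j ∈ Jset T r U c') (hjv : j ≠ iv v) : c = c' := by
  by_contra hne
  obtain ⟨a, ha, hac'⟩ := hj'
  exact Set.disjoint_left.1 (hc.disjoint_descend hT hc' hne)
    (hc.subset_descend_of_mem_Jset hT hU hj hjv ha) hac'

end IsChild

theorem exists_isChild_mem_Jset {V : Type*} {T : SimpleGraph V} {r v : V} {k : ℕ}
    {U : Fin k → Set V} {iv : V → Fin k} (hT : T.IsTree) (hU : IsConnectedPartition T U iv)
    {j : Fin k} (hj : j ∈ Jset T r U v) (hjv : j ≠ iv v) :
    ∃ c, IsChild T r v c ∧ j ∈ Jset T r U c := by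
  obtain ⟨u, hu, huv⟩ := hj
  have hne : u ≠ v := fun h => hU.notMem_of_ne hjv (h ▸ hu)
  obtain ⟨c, hc, huc⟩ := exists_isChild_of_mem_descend hT huv hne
  exact ⟨c, hc, u, hu, huc⟩

theorem setOf_mem_and_eq_inter_iff {V : Type*} {D A : Set V} {P : V → Prop} :
    {u | u ∈ D ∧ P u} = A ∩ D ↔ ∀ u ∈ D, (P u ↔ u ∈ A) := by
  simp only [Set.ext_iff, Set.mem_ofPred_eq, Set.mem_inter_iff]
  exact ⟨fun h u hu => by simpa [hu] using h u, fun h u => by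
    by_cases hu : u ∈ D <;> simp [hu, h u]⟩

section Placement

variable {V : Type*} {k : ℕ} (d : V → V → ℝ) (U S : Fin k → Set V) (D : Set V)
  (J : Set (Fin k)) (i₀ : Fin k) (f : V → ℝ) (st : Fin k → V)

/-- The sites are `st t` for `t ∈ J \ {i₀}`, together with a virtual site for the index `i₀`
at distance `f u` from each vertex `u`; for `A(v)` it is the paper's `v_new`, with
`f u = α + d v u`. -/
def InCell (j : Fin k) (u : V) : Prop :=
  (∀ t ∈ J, t ≠ i₀ → d (st j) u ≤ d (st t) u) ∧ d (st j) u ≤ f u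

def InVirtualCell (u : V) : Prop :=
  ∀ t ∈ J, t ≠ i₀ → f u ≤ d (st t) u

def CellsCorrectAt (u : V) : Prop :=
  (∀ j ∈ J, j ≠ i₀ → (InCell d J i₀ f st j u ↔ u ∈ U j)) ∧
    (InVirtualCell d J i₀ f st u ↔ u ∈ U i₀)

def IsVirtualPlacement : Prop :=
  (∀ j ∈ J, j ≠ i₀ → st j ∈ S j) ∧ ∀ u ∈ D, CellsCorrectAt d U J i₀ f st u

variable {d U S D J i₀ f st}

theorem isVirtualPlacement_congr {g : V → ℝ} {st' : Fin k → V} (hfg : ∀ u ∈ D, f u = g u)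
    (hst : ∀ j ∈ J, j ≠ i₀ → st j = st' j) :
    IsVirtualPlacement d U S D J i₀ f st ↔ IsVirtualPlacement d U S D J i₀ g st' := by
  have hdist : ∀ u, ∀ t ∈ J, t ≠ i₀ → d (st t) u = d (st' t) u := fun u t ht htv => by
    rw [hst t ht htv]
  refine and_congr (forall₃_congr fun j hj hjv => by rw [hst j hj hjv])
    (forall₂_congr fun u hu => and_congr (forall₃_congr fun j hj hjv => ?_) ?_)
  · rw [InCell, InCell, hdist u j hj hjv, hfg u hu]
    exact iff_congr (and_congr_left' (forall₃_congr fun t ht htv => by rw [hdist u t ht htv]))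
      Iff.rfl
  · rw [InVirtualCell, InVirtualCell, hfg u hu]
    exact iff_congr (forall₃_congr fun t ht htv => by rw [hdist u t ht htv]) Iff.rfl

theorem cellsCorrectAt_iff_of_far {J₁ : Set (Fin k)} (hJ : J₁ ⊆ J) {u : V}
    (hfar : ∀ t ∈ J, t ∉ J₁ → t ≠ i₀ → f u < d (st t) u ∧ u ∉ U t) :
    CellsCorrectAt d U J i₀ f st u ↔ CellsCorrectAt d U J₁ i₀ f st u := by
  have hcell : ∀ j, InCell d J i₀ f st j u ↔ InCell d J₁ i₀ f st j u := fun j =>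
    ⟨fun h => ⟨fun t ht => h.1 t (hJ ht), h.2⟩, fun h => ⟨fun t ht htv => by
      by_cases ht₁ : t ∈ J₁
      · exact h.1 t ht₁ htv
      · exact h.2.trans (hfar t ht ht₁ htv).1.le, h.2⟩⟩
  have hvirt : InVirtualCell d J i₀ f st u ↔ InVirtualCell d J₁ i₀ f st u :=
    ⟨fun h t ht => h t (hJ ht), fun h t ht htv => by
      by_cases ht₁ : t ∈ J₁
      · exact h t ht₁ htv
      · exact (hfar t ht ht₁ htv).1.le⟩
  simp only [CellsCorrectAt, hcell, hvirt]
  refine and_congr_left' ⟨fun h j hj => h j (hJ hj), fun h j hj hjv => ?_⟩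
  by_cases hj₁ : j ∈ J₁
  · exact h j hj₁ hjv
  · exact iff_of_false (fun hc => (hfar j hj hj₁ hjv).1.not_ge hc.2)
      (hfar j hj hj₁ hjv).2

theorem cellsCorrectAt_of_forall_lt {u : V} (hu : u ∈ U i₀)
    (hout : ∀ t ∈ J, t ≠ i₀ → u ∉ U t) (hlt : ∀ t ∈ J, t ≠ i₀ → f u < d (st t) u) :
    CellsCorrectAt d U J i₀ f st u :=
  (cellsCorrectAt_iff_of_far (Set.empty_subset J)
    fun t ht _ htv => ⟨hlt t ht htv, hout t ht htv⟩).2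
    ⟨fun _ hj => hj.elim, iff_of_true (fun _ ht => ht.elim) hu⟩

end Placement

/-- The strict bound on the distances to `v` is what lets placements for different children be
combined. -/
def IsChildPlacement {V : Type*} (T : SimpleGraph V) (r : V) (d : V → V → ℝ) {k : ℕ}
    (U S : Fin k → Set V) (iv : V → Fin k) (v c : V) (α : ℝ) (st : Fin k → V) : Prop :=
  IsVirtualPlacement d U S (descend T r c) (Jset T r U c) (iv v) (fun u => α + d v u) st ∧
    ∀ t ∈ Jset T r U c, t ≠ iv v → α < d (st t) v

section Recurrence

variable {V : Type*} {T : SimpleGraph V} {r : V} {w : Sym2 V → ℝ} {d : V → V → ℝ} {k : ℕ}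
  {U S : Fin k → Set V} {iv : V → Fin k} {v c : V} {α : ℝ} {st : Fin k → V}
  (hT : T.IsTree) (hw : ∀ e ∈ T.edgeSet, 0 < w e) (hd : IsPathMetric T w d)
  (hU : IsConnectedPartition T U iv) (hSU : ∀ i, S i ⊆ U i)

theorem mem_Aset_iff :
    α ∈ Aset T r d U S iv v ↔ 0 < α ∧ ∃ st, IsVirtualPlacement d U S (descend T r v)
      (Jset T r U v) (iv v) (fun u => α + d v u) st := by
  simp only [Aset, Set.mem_ofPred_eq, setOf_mem_and_eq_inter_iff]
  refine and_congr_right fun _ => exists_congr fun st => and_congr_right fun _ =>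
    ⟨fun h u hu => ⟨fun j hj hjv => h.1 j hj hjv u hu, h.2 u hu⟩,
      fun h => ⟨fun j hj hjv u hu => (h u hu).1 j hj hjv, fun u hu => (h u hu).2⟩⟩

theorem mem_Ashift_iff :
    α ∈ Ashift T r w d U S iv v c ↔ α + w s(v, c) ∈ Aset T r d U S iv c :=
  ⟨fun ⟨_, hy, hα⟩ => by rwa [hα, sub_add_cancel],
    fun h => ⟨_, h, (add_sub_cancel_right _ _).symm⟩⟩

theorem isChildPlacement_congr {st' : Fin k → V}
    (hst : ∀ j ∈ Jset T r U c, j ≠ iv v → st j = st' j) :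
    IsChildPlacement T r d U S iv v c α st ↔ IsChildPlacement T r d U S iv v c α st' :=
  and_congr (isVirtualPlacement_congr (fun _ _ => rfl) hst)
    (forall₃_congr fun t ht htv => by rw [hst t ht htv])

include hT hw hd hU hSU in
theorem IsVirtualPlacement.lt_of_isChild
    (hP : IsVirtualPlacement d U S (descend T r v) (Jset T r U v) (iv v) (fun u => α + d v u) st)
    (hc : IsChild T r v c) {t : Fin k} (ht : t ∈ Jset T r U c) (htv : t ≠ iv v) :
    α < d (st t) v := by
  obtain ⟨hS, hcell⟩ := hP
  have hJ := hc.Jset_subset hT (U := U)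
  have hwc : 0 < w s(v, c) := hw _ hc.1
  have hvc : d v c = w s(v, c) := hd.adj hc.1
  have hsite : ∀ j ∈ Jset T r U c, j ≠ iv v → d (st j) v = d (st j) c + w s(v, c) :=
    fun j hj hjv => hd.eq_add_weight_of_isChild hT hc
      (hc.subset_descend_of_mem_Jset hT hU hj hjv (hSU j (hS j (hJ hj) hjv)))
  rw [hsite t ht htv]
  by_cases hi : iv c = iv v
  · have := ((hcell c hc.2).2.2 (hi ▸ hU.mem c)) t (hJ ht) htv
    linarith
  · have hic : iv c ∈ Jset T r U c := ⟨c, hU.mem c, mem_descend_self c⟩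
    have hcc := ((hcell c hc.2).1 (iv c) (hJ hic) hi).2 (hU.mem c)
    have hvirt := (hcell v (mem_descend_self v)).2.2 (hU.mem v)
    -- `v` is won by the virtual site, so the site of the cell of `c` is farther than `α` from it
    have hlt : α < d (st (iv c)) v := by
      by_contra! hle
      refine hU.notMem_of_ne hi (((hcell v (mem_descend_self v)).1 (iv c) (hJ hic) hi).1
        ⟨fun t' ht' ht'v => ?_, by simpa [hd.self] using hle⟩)
      have := hvirt t' ht' ht'v
      simp only [hd.self, add_zero] at this
      linarith
    rw [hsite _ hic hi] at hlt
    linarith [hcc.1 t (hJ ht) htv]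

include hT hd hSU in
theorem cellsCorrectAt_iff_of_isChild (hc : IsChild T r v c)
    (hS : ∀ t ∈ Jset T r U v, t ≠ iv v → st t ∈ S t)
    (hlt : ∀ t ∈ Jset T r U v, t ≠ iv v → α < d (st t) v) {u : V} (hu : u ∈ descend T r c) :
    CellsCorrectAt d U (Jset T r U v) (iv v) (fun u => α + d v u) st u ↔
      CellsCorrectAt d U (Jset T r U c) (iv v) (fun u => α + d v u) st u := by
  refine cellsCorrectAt_iff_of_far (hc.Jset_subset hT) fun t ht htc htv => ?_
  have hout : ∀ x ∈ U t, x ∉ descend T r c := fun x hx hxc => htc ⟨x, hx, hxc⟩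
  refine ⟨?_, fun h => hout u h hu⟩
  have := hd.eq_add_of_isChild hT hc hu (hout _ (hSU t (hS t ht htv)))
  rw [hd.symm hT (st t), this, hd.symm hT u v, hd.symm hT v (st t)]
  linarith [hlt t ht htv]

include hT hw hd hU hSU in
theorem IsVirtualPlacement.isChildPlacement
    (hP : IsVirtualPlacement d U S (descend T r v) (Jset T r U v) (iv v) (fun u => α + d v u) st)
    (hc : IsChild T r v c) : IsChildPlacement T r d U S iv v c α st := by
  have hlt : ∀ t ∈ Jset T r U v, t ≠ iv v → α < d (st t) v := fun t ht htv =>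
    have ⟨c', hc', htc'⟩ := exists_isChild_mem_Jset hT hU ht htv
    hP.lt_of_isChild hT hw hd hU hSU hc' htc' htv
  have hJ := hc.Jset_subset hT (U := U)
  refine ⟨⟨fun j hj hjv => hP.1 j (hJ hj) hjv, fun u hu => ?_⟩,
    fun t ht htv => hlt t (hJ ht) htv⟩
  exact (cellsCorrectAt_iff_of_isChild hT hd hSU hc hP.1 hlt hu).1
    (hP.2 u (hc.descend_subset hT hu))

include hT hd hU hSU in
theorem isVirtualPlacement_of_forall_isChild
    (h : ∀ c, IsChild T r v c → IsChildPlacement T r d U S iv v c α st) :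
    IsVirtualPlacement d U S (descend T r v) (Jset T r U v) (iv v) (fun u => α + d v u) st := by
  have hS : ∀ t ∈ Jset T r U v, t ≠ iv v → st t ∈ S t := fun t ht htv =>
    have ⟨c, hc, htc⟩ := exists_isChild_mem_Jset hT hU ht htv
    (h c hc).1.1 t htc htv
  have hlt : ∀ t ∈ Jset T r U v, t ≠ iv v → α < d (st t) v := fun t ht htv =>
    have ⟨c, hc, htc⟩ := exists_isChild_mem_Jset hT hU ht htv
    (h c hc).2 t htc htv
  refine ⟨hS, fun u hu => ?_⟩
  obtain rfl | huv := eq_or_ne u v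
  · exact cellsCorrectAt_of_forall_lt (hU.mem u) (fun t _ htv => hU.notMem_of_ne htv)
      fun t ht htv => by simpa [hd.self] using hlt t ht htv
  · obtain ⟨c, hc, huc⟩ := exists_isChild_of_mem_descend hT hu huv
    exact (cellsCorrectAt_iff_of_isChild hT hd hSU hc hS hlt huc).2 ((h c hc).1.2 u huc)

include hT hw hd hU hSU in
theorem mem_Aset_iff_forall_isChild :
    α ∈ Aset T r d U S iv v ↔
      0 < α ∧ ∀ c, IsChild T r v c → ∃ st, IsChildPlacement T r d U S iv v c α st := by
  rw [mem_Aset_iff]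
  refine and_congr_right fun _ =>
    ⟨fun ⟨st, hP⟩ c hc => ⟨st, hP.isChildPlacement hT hw hd hU hSU hc⟩, fun h => ?_⟩
  choose! place hplace using h
  have : Nonempty V := ⟨v⟩
  -- an index outside the cell of `v` meets the subtree of exactly one child, its `owner`
  let owner (j : Fin k) : V := Classical.epsilon fun c => IsChild T r v c ∧ j ∈ Jset T r U c
  have howner : ∀ c, IsChild T r v c → ∀ j ∈ Jset T r U c, j ≠ iv v → owner j = c :=
    fun c hc j hj hjv =>
      have hspec := Classical.epsilon_spec (p := fun c => IsChild T r v c ∧ j ∈ Jset T r U c)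
        ⟨c, hc, hj⟩
      hspec.1.eq_of_mem_Jset hT hU hc hspec.2 hj hjv
  refine ⟨fun j => place (owner j) j, isVirtualPlacement_of_forall_isChild hT hd hU hSU
    fun c hc => (isChildPlacement_congr fun j hj hjv => ?_).1 (hplace c hc)⟩
  rw [howner c hc j hj hjv]

include hT hw hd hU hSU in
theorem exists_isChildPlacement_iff_mem_Ashift (hc : IsChild T r v c) (hi : iv c = iv v)
    (hα : 0 < α) :
    (∃ st, IsChildPlacement T r d U S iv v c α st) ↔ α ∈ Ashift T r w d U S iv v c := by
  have hwc : 0 < w s(v, c) := hw _ hc.1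
  have hf : ∀ u ∈ descend T r c, α + d v u = α + w s(v, c) + d c u := fun u hu => by
    rw [hd.eq_weight_add_of_isChild hT hc hu, add_assoc]
  rw [mem_Ashift_iff, mem_Aset_iff, hi]
  simp only [← isVirtualPlacement_congr hf fun _ _ _ => rfl]
  refine ⟨fun ⟨st, hP, _⟩ => ⟨by linarith, st, hP⟩, fun ⟨_, st, hP⟩ => ⟨st, hP, ?_⟩⟩
  intro t ht htv
  have hvirt := (hP.2 c (mem_descend_self c)).2.2 (hi ▸ hU.mem c) t ht htv
  have hsite := hd.eq_add_weight_of_isChild hT hc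
    (hc.subset_descend_of_mem_Jset hT hU ht htv (hSU t (hP.1 t ht htv)))
  simp only [hd.adj hc.1] at hvirt
  linarith

include hT hd hU hSU in
theorem IsChildPlacement.mem_Cshift (hP : IsChildPlacement T r d U S iv v c α st)
    (hc : IsChild T r v c) (hvc : iv v ∉ Jset T r U c) : α ∈ Cshift T r w d U S iv v c := by
  obtain ⟨⟨hS, hcell⟩, hlt⟩ := hP
  have hJ : ∀ t ∈ Jset T r U c, t ≠ iv v := fun t ht htv => hvc (htv ▸ ht)
  have hic : iv c ∈ Jset T r U c := ⟨c, hU.mem c, mem_descend_self c⟩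
  have hsite : ∀ j ∈ Jset T r U c, st j ∈ descend T r c := fun j hj =>
    hc.subset_descend_of_mem_Jset hT hU hj (hJ j hj) (hSU j (hS j hj (hJ j hj)))
  -- `T(c)` misses the cell of `v`, so the virtual site wins none of it
  have hnear : ∀ u ∈ descend T r c, ∃ t ∈ Jset T r U c, d (st t) u < α + d v u := fun u hu => by
    have := mt (hcell u hu).2.1 fun hvu => hvc ⟨u, hvu, hu⟩
    simp only [InVirtualCell, not_forall, not_le] at this
    obtain ⟨t, ht, -, hlt⟩ := this
    exact ⟨t, ht, hlt⟩
  simp only [Cshift, Bset, Set.mem_ofPred_eq, setOf_mem_and_eq_inter_iff]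
  refine ⟨_, ⟨st, fun j hj => ⟨hS j hj (hJ j hj), hsite j hj⟩, fun j hj u hu => ?_, rfl⟩, ?_, ?_⟩
  · rw [← (hcell u hu).1 j hj (hJ j hj)]
    obtain ⟨t, ht, htu⟩ := hnear u hu
    exact ⟨fun h => ⟨fun t' ht' _ => h t' ht', (h t ht).trans htu.le⟩,
      fun h t' ht' => h.1 t' ht' (hJ t' ht')⟩
  · obtain ⟨t, ht, htc⟩ := hnear c (mem_descend_self c)
    have := ((hcell c (mem_descend_self c)).1 _ hic (hJ _ hic)).2 (hU.mem c)
    rw [hd.eq_weight_add_of_isChild hT hc (mem_descend_self c), hd.self] at htc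
    linarith [this.1 t ht (hJ t ht)]
  · have := hlt _ hic (hJ _ hic)
    rw [hd.eq_add_weight_of_isChild hT hc (hsite _ hic)] at this
    linarith

include hT hw hd hU in
theorem exists_isChildPlacement_of_mem_Cshift (hc : IsChild T r v c)
    (hvc : iv v ∉ Jset T r U c) (hα : α ∈ Cshift T r w d U S iv v c) :
    ∃ st, IsChildPlacement T r d U S iv v c α st := by
  simp only [Cshift, Bset, Set.mem_ofPred_eq, setOf_mem_and_eq_inter_iff] at hα
  obtain ⟨_, ⟨st, hS, hcell, rfl⟩, hlo, hhi⟩ := hα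
  have hJ : ∀ t ∈ Jset T r U c, t ≠ iv v := fun t ht htv => hvc (htv ▸ ht)
  have hic : iv c ∈ Jset T r U c := ⟨c, hU.mem c, mem_descend_self c⟩
  have hnear : ∀ u ∈ descend T r c, d (st (iv c)) u < α + d v u := fun u hu => by
    linarith [hd.triangle hT hw (st (iv c)) c u, hd.eq_weight_add_of_isChild hT hc hu]
  have hcmin : ∀ t ∈ Jset T r U c, d (st (iv c)) c ≤ d (st t) c :=
    ((hcell _ hic) c (mem_descend_self c)).2 (hU.mem c)
  refine ⟨st, ⟨fun j hj _ => (hS j hj).1, fun u hu => ⟨fun j hj hjv => ?_, ?_⟩⟩,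
    fun t ht _ => ?_⟩
  · rw [← hcell j hj u hu]
    exact ⟨fun h t ht => h.1 t ht (hJ t ht), fun h =>
      ⟨fun t ht _ => h t ht, (h _ hic).trans (hnear u hu).le⟩⟩
  · exact iff_of_false (fun h => (h _ hic (hJ _ hic)).not_gt (hnear u hu))
      fun hvu => hvc ⟨u, hvu, hu⟩
  · rw [hd.eq_add_weight_of_isChild hT hc (hS t ht).2]
    linarith [hcmin t ht]

include hT hw hd hU hSU in
theorem exists_isChildPlacement_iff_mem_Cshift (hc : IsChild T r v c) (hi : iv c ≠ iv v) :
    (∃ st, IsChildPlacement T r d U S iv v c α st) ↔ α ∈ Cshift T r w d U S iv v c := by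
  have hvc : iv v ∉ Jset T r U c := fun h => hi (hc.iv_eq_of_mem_Jset hT hU h)
  exact ⟨fun ⟨_, hP⟩ => hP.mem_Cshift hT hd hU hSU hc hvc,
    exists_isChildPlacement_of_mem_Cshift hT hw hd hU hc hvc⟩

end Recurrence

theorem Aset_recurrence_general
    {V : Type*} (T : SimpleGraph V) (hT : T.IsTree)
    (w : Sym2 V → ℝ) (hw : ∀ e ∈ T.edgeSet, 0 < w e)
    (d : V → V → ℝ)
    (hd : ∀ (u v : V) (p : T.Walk u v), p.IsPath → (p.edges.map w).sum = d u v)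
    (r : V)
    (k : ℕ) (U S : Fin k → Set V)
    (hdisj : ∀ i j, i ≠ j → Disjoint (U i) (U j))
    (hUconn : ∀ i, (T.induce (U i)).Connected)
    (hSU : ∀ i, S i ⊆ U i)
    (iv : V → Fin k) (hiv : ∀ u, u ∈ U (iv u))
    (v v₁ v₂ : V)
    (hchild : ∀ c : V, (T.Adj v c ∧ c ∈ descend T r v) ↔ (c = v₁ ∨ c = v₂)) :
    (iv v = iv v₁ ∧ iv v = iv v₂ →
      Aset T r d U S iv v = Set.Ioi (0 : ℝ) ∩
        (Ashift T r w d U S iv v v₁ ∩ Ashift T r w d U S iv v v₂)) ∧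
    (iv v = iv v₁ ∧ iv v ≠ iv v₂ →
      Aset T r d U S iv v = Set.Ioi (0 : ℝ) ∩
        (Ashift T r w d U S iv v v₁ ∩ Cshift T r w d U S iv v v₂)) ∧
    (iv v = iv v₂ ∧ iv v ≠ iv v₁ →
      Aset T r d U S iv v = Set.Ioi (0 : ℝ) ∩
        (Ashift T r w d U S iv v v₂ ∩ Cshift T r w d U S iv v v₁)) ∧
    (iv v ≠ iv v₁ ∧ iv v ≠ iv v₂ →
      Aset T r d U S iv v = Set.Ioi (0 : ℝ) ∩
        (Cshift T r w d U S iv v v₁ ∩ Cshift T r w d U S iv v v₂)) := by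
  have hU : IsConnectedPartition T U iv := ⟨hdisj, hUconn, hiv⟩
  have hA : ∀ α, α ∈ Aset T r d U S iv v ↔ 0 < α ∧
      (∃ st, IsChildPlacement T r d U S iv v v₁ α st) ∧
        ∃ st, IsChildPlacement T r d U S iv v v₂ α st := fun α => by
    simpa only [IsChild, hchild, forall_eq_or_imp, forall_eq] using
      mem_Aset_iff_forall_isChild (r := r) (v := v) (α := α) hT hw hd hU hSU
  have h₁ : IsChild T r v v₁ := (hchild v₁).2 (Or.inl rfl)
  have h₂ : IsChild T r v v₂ := (hchild v₂).2 (Or.inr rfl)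
  have hAs : ∀ c, IsChild T r v c → iv v = iv c → ∀ α, 0 < α →
      ((∃ st, IsChildPlacement T r d U S iv v c α st) ↔ α ∈ Ashift T r w d U S iv v c) :=
    fun c hc hi _ hα => exists_isChildPlacement_iff_mem_Ashift hT hw hd hU hSU hc hi.symm hα
  have hCs : ∀ c, IsChild T r v c → iv v ≠ iv c → ∀ α,
      ((∃ st, IsChildPlacement T r d U S iv v c α st) ↔ α ∈ Cshift T r w d U S iv v c) :=
    fun c hc hi _ => exists_isChildPlacement_iff_mem_Cshift hT hw hd hU hSU hc hi.symm
  refine ⟨fun ⟨e₁, e₂⟩ => ?_, fun ⟨e₁, e₂⟩ => ?_, fun ⟨e₂, e₁⟩ => ?_, fun ⟨e₁, e₂⟩ => ?_⟩ <;>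
    ext α <;> simp only [hA, Set.mem_inter_iff, Set.mem_Ioi] <;>
    refine and_congr_right fun hα => ?_
  · rw [hAs v₁ h₁ e₁ α hα, hAs v₂ h₂ e₂ α hα]
  · rw [hAs v₁ h₁ e₁ α hα, hCs v₂ h₂ e₂ α]
  · rw [hCs v₁ h₁ e₁ α, hAs v₂ h₂ e₂ α hα, and_comm]
  · rw [hCs v₁ h₁ e₁ α, hCs v₂ h₂ e₂ α]

/-- The dynamic-programming recurrence for `A(v)` at a vertex `v` with two children
`v₁, v₂`, by cases on whether the cells of `v₁`, `v₂` agree with the cell of `v`. -/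
theorem Aset_recurrence
    {V : Type*} [Fintype V] [DecidableEq V] (T : SimpleGraph V) (hT : T.IsTree)
    (w : Sym2 V → ℝ) (hw : ∀ e ∈ T.edgeSet, 0 < w e)
    (d : V → V → ℝ)
    (hd : ∀ (u v : V) (p : T.Walk u v), p.IsPath → (p.edges.map w).sum = d u v)
    (r : V) (hroot : ∃! u, T.Adj r u)
    (hdeg : ∀ u : V, ({c | T.Adj u c ∧ c ∈ descend T r u} : Set V).ncard ≤ 2)
    (k : ℕ) (U S : Fin k → Set V)
    (hcover : (⋃ i, U i) = Set.univ)
    (hdisj : ∀ i j, i ≠ j → Disjoint (U i) (U j))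
    (hUconn : ∀ i, (T.induce (U i)).Connected)
    (hSU : ∀ i, S i ⊆ U i)
    (iv : V → Fin k) (hiv : ∀ u, u ∈ U (iv u))
    (v v₁ v₂ : V) (hne : v₁ ≠ v₂)
    (hchild : ∀ c : V, (T.Adj v c ∧ c ∈ descend T r v) ↔ (c = v₁ ∨ c = v₂)) :
    (iv v = iv v₁ ∧ iv v = iv v₂ →
      Aset T r d U S iv v = Set.Ioi (0 : ℝ) ∩
        (Ashift T r w d U S iv v v₁ ∩ Ashift T r w d U S iv v v₂)) ∧
    (iv v = iv v₁ ∧ iv v ≠ iv v₂ →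
      Aset T r d U S iv v = Set.Ioi (0 : ℝ) ∩
        (Ashift T r w d U S iv v v₁ ∩ Cshift T r w d U S iv v v₂)) ∧
    (iv v = iv v₂ ∧ iv v ≠ iv v₁ →
      Aset T r d U S iv v = Set.Ioi (0 : ℝ) ∩
        (Ashift T r w d U S iv v v₂ ∩ Cshift T r w d U S iv v v₁)) ∧
    (iv v ≠ iv v₁ ∧ iv v ≠ iv v₂ →
      Aset T r d U S iv v = Set.Ioi (0 : ℝ) ∩
        (Cshift T r w d U S iv v v₁ ∩ Cshift T r w d U S iv v v₂)) :=
  Aset_recurrence_general T hT w hw d hd r k U S hdisj hUconn hSU iv hiv v v₁ v₂ hchild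
end
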